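/- arXiv:1203.5751 — 3 statements merged into one kernel-verified Lean document; each statement's English description precedes it below -/
import Mathlib

section
/- For compositions λ, μ of r, the map W_λ w W_μ ↦ {w T_μ^λ} gives a bijection between the set of double cosets W_λ\W/W_μ and the set of row-equivalence classes of generalized tableaux of shape λ and content μ; moreover each row-equivalence class contains exactly one row-semistandard tableau. -/
open Equiv Finset

noncomputable section

/-- Coxeter length of a permutation of `Fin r` = number of inversions. -/
def permLength {r : ℕ} (w : Equiv.Perm (Fin r)) : ℕ :=
  (Finset.univ.filter (fun p : Fin r × Fin r => p.1 < p.2 ∧ w p.2 < w p.1)).card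

/-- the simple transpositions `(i, i+1)`. -/
def IsSimpleTransposition {r : ℕ} (s : Equiv.Perm (Fin r)) : Prop :=
  ∃ (i : ℕ) (h : i + 1 < r), s = Equiv.swap ⟨i, Nat.lt_of_succ_lt h⟩ ⟨i + 1, h⟩

/-- strong Bruhat order: `u ⊴ v` iff `u` is the product of a sublist of a reduced word for `v`. -/
def BruhatLE {r : ℕ} (u v : Equiv.Perm (Fin r)) : Prop :=
  ∃ L : List (Equiv.Perm (Fin r)),
    (∀ s ∈ L, IsSimpleTransposition s) ∧ L.prod = v ∧ L.length = permLength v ∧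
      ∃ L' : List (Equiv.Perm (Fin r)), L'.Sublist L ∧ L'.prod = u

def partialSum (f : ℕ → ℕ) (e : ℕ) : ℕ := ∑ j ∈ Finset.range e, f j

/-- a composition of `r`: a (finitely supported) sequence of non-negative integers summing to `r`. -/
def IsCompositionOf (f : ℕ → ℕ) (r : ℕ) : Prop :=
  (Function.support f).Finite ∧ ∑ᶠ i, f i = r

/-- dominance order on compositions: `DomLE f g` means `f ⊴ g`. -/
def DomLE (f g : ℕ → ℕ) : Prop := ∀ e : ℕ, partialSum f e ≤ partialSum g e

/-- (0-indexed) row of the box `b` in the Young diagram of the composition `f`,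
boxes being numbered `0, 1, 2, …` along the rows. -/
def rowIndex {r : ℕ} (f : ℕ → ℕ) (b : Fin r) : ℕ :=
  sInf {i : ℕ | (b : ℕ) < partialSum f (i + 1)}

/-- the Young (standard parabolic) subgroup `W_f`, as a set of permutations. -/
def YoungSubgroup {r : ℕ} (f : ℕ → ℕ) : Set (Equiv.Perm (Fin r)) :=
  {w | ∀ b : Fin r, rowIndex f (w b) = rowIndex f b}

/-- `W_{f,g}`; positions are acted on on the right, `(b)w = w⁻¹ b`. -/
def Wlm {r : ℕ} (f g : ℕ → ℕ) : Set (Equiv.Perm (Fin r)) :=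
  {w | ∀ (i : ℕ) (b : Fin r), i ≤ rowIndex f b → i ≤ rowIndex g (w⁻¹ b)}

/-- `D_f`: minimal length representatives of the cosets `W_f d`. -/
def minimalCosetReps {r : ℕ} (f : ℕ → ℕ) : Set (Equiv.Perm (Fin r)) :=
  {d | ∀ π ∈ YoungSubgroup (r := r) f, permLength d ≤ permLength (π * d)}

/-- a tableau of shape `f` is encoded by its entry function, a permutation of the boxes;
the tableau `t^f d` corresponds to the entry function `d⁻¹`. -/
def IsRowStandard {r : ℕ} (f : ℕ → ℕ) (t : Equiv.Perm (Fin r)) : Prop :=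
  ∀ b₁ b₂ : Fin r, rowIndex f b₁ = rowIndex f b₂ → b₁ < b₂ → t b₁ < t b₂

/-- generalized tableaux are functions `Fin r → ℕ`; content `g` (0-indexed entries). -/
def HasContent {r : ℕ} (g : ℕ → ℕ) (T : Fin r → ℕ) : Prop :=
  ∀ i : ℕ, (Finset.univ.filter (fun b => T b = i)).card = g i

def IsRowSemistandard {r : ℕ} (f : ℕ → ℕ) (T : Fin r → ℕ) : Prop :=
  ∀ b₁ b₂ : Fin r, rowIndex f b₁ = rowIndex f b₂ → b₁ ≤ b₂ → T b₁ ≤ T b₂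

/-- ascending: every entry in row `i` is `≥ i`. -/
def IsAscending {r : ℕ} (f : ℕ → ℕ) (T : Fin r → ℕ) : Prop :=
  ∀ b : Fin r, rowIndex f b ≤ T b

/-- `T^λ_g`: the boxes filled in the natural order with `g 0` zeroes, `g 1` ones, … -/
def stdTableau {r : ℕ} (g : ℕ → ℕ) : Fin r → ℕ := fun b => rowIndex g b

/-- conjugate (dual) of a partition. -/
def conjFn (l : ℕ → ℕ) : ℕ → ℕ := fun i => Nat.card {k : ℕ | i + 1 ≤ l k}

/-- (row, column) coordinates of box `b` in the diagram of `f`. -/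
def boxPlace {r : ℕ} (f : ℕ → ℕ) (b : Fin r) : ℕ × ℕ :=
  (rowIndex f b, (b : ℕ) - partialSum f (rowIndex f b))

namespace AuxStatement5

variable {r : ℕ}

lemma partialSum_mono (f : ℕ → ℕ) : Monotone (partialSum f) := fun _ _ hab =>
  Finset.sum_le_sum_of_subset (Finset.range_subset_range.2 hab)

lemma exists_N (f : ℕ → ℕ) (hf : IsCompositionOf f r) :
    ∃ N, ∀ e, N ≤ e → partialSum f e = r := by
  obtain ⟨hfin, hsum⟩ := hf
  obtain ⟨N, hN⟩ := Finset.exists_nat_subset_range hfin.toFinset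
  refine ⟨N, fun e he => ?_⟩
  rw [← hsum, finsum_eq_sum f hfin]
  unfold partialSum
  refine (Finset.sum_subset (hN.trans (Finset.range_subset_range.2 he)) ?_).symm
  intro x _ hx
  exact Function.notMem_support.mp (fun h => hx (hfin.mem_toFinset.2 h))

lemma partialSum_le (f : ℕ → ℕ) (hf : IsCompositionOf f r) (e : ℕ) : partialSum f e ≤ r := by
  obtain ⟨N, hN⟩ := exists_N f hf
  calc partialSum f e ≤ partialSum f (max e N) := partialSum_mono f (le_max_left _ _)
    _ = r := hN _ (le_max_right _ _)

lemma rowIndex_spec (f : ℕ → ℕ) (hf : IsCompositionOf f r) (b : Fin r) :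
    partialSum f (rowIndex f b) ≤ (b : ℕ) ∧ (b : ℕ) < partialSum f (rowIndex f b + 1) := by
  obtain ⟨N, hN⟩ := exists_N f hf
  have hne : {i : ℕ | (b : ℕ) < partialSum f (i + 1)}.Nonempty :=
    ⟨N, by simp only [Set.mem_setOf_eq, hN (N + 1) (Nat.le_succ N)]; exact b.isLt⟩
  constructor
  · rcases h : rowIndex f b with _ | k
    · simp [partialSum]
    · have hk : k < rowIndex f b := h ▸ Nat.lt_succ_self k
      have := Nat.notMem_of_lt_sInf (s := {i : ℕ | (b : ℕ) < partialSum f (i + 1)}) hk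
      simpa [Set.mem_setOf_eq, Nat.not_lt] using this
  · exact Nat.sInf_mem hne

lemma rowIndex_eq_iff (f : ℕ → ℕ) (hf : IsCompositionOf f r) (b : Fin r) (i : ℕ) :
    rowIndex f b = i ↔ partialSum f i ≤ (b : ℕ) ∧ (b : ℕ) < partialSum f (i + 1) := by
  constructor
  · rintro rfl; exact rowIndex_spec f hf b
  · rintro ⟨h1, h2⟩
    obtain ⟨ha, hb⟩ := rowIndex_spec f hf b
    by_contra hne
    rcases Nat.lt_or_ge (rowIndex f b) i with h | h
    · have := partialSum_mono f (show rowIndex f b + 1 ≤ i by omega)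
      omega
    · have h' : i < rowIndex f b := lt_of_le_of_ne h (Ne.symm hne)
      have := partialSum_mono f (show i + 1 ≤ rowIndex f b by omega)
      omega

lemma rowIndex_mono (f : ℕ → ℕ) (hf : IsCompositionOf f r) {b b' : Fin r} (h : b ≤ b') :
    rowIndex f b ≤ rowIndex f b' := by
  have h2 := (rowIndex_spec f hf b').2
  exact Nat.sInf_le (show (b : ℕ) < partialSum f (rowIndex f b' + 1) from
    lt_of_le_of_lt (Fin.le_def.mp h) h2)

lemma card_row (f : ℕ → ℕ) (hf : IsCompositionOf f r) (i : ℕ) :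
    (Finset.univ.filter fun b : Fin r => rowIndex f b = i).card = f i := by
  have hle : partialSum f (i + 1) ≤ r := partialSum_le f hf (i + 1)
  have hcard : (Finset.univ.filter fun b : Fin r => rowIndex f b = i).card
      = (Finset.Ico (partialSum f i) (partialSum f (i + 1))).card := by
    apply Finset.card_nbij (fun b : Fin r => (b : ℕ))
    · intro a ha
      simp only [Finset.coe_filter, Set.mem_setOf_eq, Finset.mem_filter, Finset.mem_univ, true_and] at ha
      rw [rowIndex_eq_iff f hf a i] at ha
      simpa [Finset.mem_Ico] using ha
    · intro a _ b _ hab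
      exact Fin.val_injective hab
    · intro n hn
      simp only [Finset.coe_Ico, Set.mem_Ico] at hn
      refine ⟨⟨n, lt_of_lt_of_le hn.2 hle⟩, ?_, rfl⟩
      simp only [Finset.coe_filter, Set.mem_setOf_eq, Finset.mem_univ, true_and]
      exact (rowIndex_eq_iff f hf _ i).2 ⟨hn.1, hn.2⟩
  rw [hcard, Nat.card_Ico]
  unfold partialSum
  rw [Finset.sum_range_succ]
  omega

lemma young_inv {f : ℕ → ℕ} {w : Equiv.Perm (Fin r)} (hw : w ∈ YoungSubgroup (r := r) f) :
    w⁻¹ ∈ YoungSubgroup (r := r) f := by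
  intro b
  have := hw (w⁻¹ b)
  simpa using this.symm

lemma map_perm_eq (S : Finset (Fin r)) (e : Equiv.Perm (Fin r)) (hS : ∀ b, e b ∈ S ↔ b ∈ S)
    (T : Fin r → ℕ) : S.val.map (fun b => T (e b)) = S.val.map T := by
  have h1 : S.map e.toEmbedding = S := by
    ext b
    rw [Finset.mem_map_equiv]
    rw [← hS (e.symm b)]
    simp
  calc S.val.map (fun b => T (e b)) = (S.val.map e).map T := by
        rw [Multiset.map_map]; rfl
    _ = (S.map e.toEmbedding).val.map T := by simp [Finset.map_val]
    _ = S.val.map T := by rw [h1]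

lemma mono_eq_on (S : Finset (Fin r)) (f₁ f₂ : Fin r → ℕ)
    (h1 : ∀ a ∈ S, ∀ b ∈ S, a ≤ b → f₁ a ≤ f₁ b)
    (h2 : ∀ a ∈ S, ∀ b ∈ S, a ≤ b → f₂ a ≤ f₂ b)
    (hm : S.val.map f₁ = S.val.map f₂) :
    ∀ b ∈ S, f₁ b = f₂ b := by
  set L := S.sort (· ≤ ·) with hL
  have hcoe : (L : Multiset (Fin r)) = S.val := Finset.sort_eq S _
  have hperm : (L.map f₁).Perm (L.map f₂) := by
    rw [← Multiset.coe_eq_coe]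
    show ((L : Multiset (Fin r)).map f₁) = ((L : Multiset (Fin r)).map f₂)
    rw [hcoe, hm]
  have hs : ∀ (f : Fin r → ℕ), (∀ a ∈ S, ∀ b ∈ S, a ≤ b → f a ≤ f b) →
      (L.map f).Pairwise (· ≤ ·) := by
    intro f hf
    rw [List.pairwise_map]
    refine (Finset.pairwise_sort S (· ≤ ·)).imp_of_mem ?_
    intro a b ha hb hab
    exact hf a (Finset.mem_sort (α := Fin r) (· ≤ ·) |>.1 ha) b
      (Finset.mem_sort (α := Fin r) (· ≤ ·) |>.1 hb) hab
  have heq : L.map f₁ = L.map f₂ := List.Perm.eq_of_pairwise' (hs f₁ h1) (hs f₂ h2) hperm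
  intro b hb
  obtain ⟨n, hn, hbe⟩ := List.getElem_of_mem ((Finset.mem_sort (α := Fin r) (· ≤ ·)).2 hb)
  rw [← hbe]
  have h1' := congrArg (fun ll : List ℕ => ll[n]?) heq
  simp only [List.getElem?_map] at h1'
  rw [List.getElem?_eq_getElem (show n < L.length from hn)] at h1'
  simpa using h1'

end AuxStatement5


open AuxStatement5

theorem statement5 (r : ℕ) (l g : ℕ → ℕ) (hl : IsCompositionOf l r) (hg : IsCompositionOf g r) :
    (∀ w w' : Equiv.Perm (Fin r),
      ((∃ π ∈ YoungSubgroup (r := r) l,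
          (fun b => stdTableau (r := r) g (w'⁻¹ b)) =
            fun b => stdTableau (r := r) g (w⁻¹ (π⁻¹ b)))
        ↔ ∃ a ∈ YoungSubgroup (r := r) l, ∃ c ∈ YoungSubgroup (r := r) g, w' = a * w * c)) ∧
    (∀ T : Fin r → ℕ, HasContent g T →
      ∃ w : Equiv.Perm (Fin r), T = fun b => stdTableau (r := r) g (w⁻¹ b)) ∧
    (∀ T : Fin r → ℕ, HasContent g T →
      ∃! T' : Fin r → ℕ,
        (∃ π ∈ YoungSubgroup (r := r) l, T' = fun b => T (π⁻¹ b)) ∧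
          IsRowSemistandard l T') := by
  refine ⟨?_, ?_, ?_⟩
  · -- part 1
    intro w w'
    constructor
    · rintro ⟨π, hπ, heq⟩
      refine ⟨π, hπ, w⁻¹ * π⁻¹ * w', ?_, by group⟩
      intro b
      have h1 := congrFun heq (w' b)
      simp only [stdTableau, Equiv.Perm.coe_inv, Equiv.symm_apply_apply] at h1
      simpa [Equiv.Perm.mul_apply] using h1.symm
    · rintro ⟨a, ha, c, hc, rfl⟩
      refine ⟨a, ha, ?_⟩
      funext b
      simp only [stdTableau, mul_inv_rev, Equiv.Perm.mul_apply]
      exact young_inv hc _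
  · -- part 2
    intro T hT
    have hcard : ∀ i : ℕ, Fintype.card {b : Fin r // T b = i}
        = Fintype.card {b : Fin r // stdTableau (r := r) g b = i} := by
      intro i
      rw [Fintype.card_subtype, Fintype.card_subtype, hT i]
      exact (card_row g hg i).symm
    let E : Fin r ≃ Fin r := Equiv.ofFiberEquiv (fun i => Fintype.equivOfCardEq (hcard i))
    refine ⟨E.symm, ?_⟩
    funext b
    have := Equiv.ofFiberEquiv_map (fun i => Fintype.equivOfCardEq (hcard i)) b
    simpa [E, Equiv.Perm.inv_def] using this.symm
  · -- part 3
    intro T hT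
    set F : Fin r → Lex (ℕ × ℕ) := fun b => toLex (rowIndex l b, T b) with hF
    set σ := Tuple.sort F with hσ
    have hmono : Monotone (F ∘ σ) := Tuple.monotone_sort F
    have hrow : ∀ b, rowIndex l (σ b) = rowIndex l b := by
      have key := mono_eq_on Finset.univ (fun b => rowIndex l (σ b)) (fun b => rowIndex l b)
        (fun a _ b _ hab => by
          have h := hmono hab
          rcases (Prod.Lex.le_iff).1 h with h' | h'
          · exact le_of_lt h'
          · exact le_of_eq h'.1)
        (fun a _ b _ hab => rowIndex_mono l hl hab)
        (map_perm_eq Finset.univ σ (by simp) (rowIndex l))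
      exact fun b => key b (Finset.mem_univ b)
    have hσmem : σ ∈ YoungSubgroup (r := r) l := hrow
    have hrss : IsRowSemistandard l (fun b => T (σ b)) := by
      intro b₁ b₂ h12 hle
      have h := hmono hle
      rcases (Prod.Lex.le_iff).1 h with h' | h'
      · exfalso
        have : rowIndex l (σ b₁) < rowIndex l (σ b₂) := h'
        rw [hrow, hrow, h12] at this
        exact lt_irrefl _ this
      · exact h'.2
    refine ⟨fun b => T (σ b), ⟨⟨σ⁻¹, young_inv hσmem, by simp⟩, hrss⟩, ?_⟩
    rintro T'' ⟨⟨π'', hπ'', rfl⟩, hss''⟩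
    funext b
    have hbmem : b ∈ Finset.univ.filter (fun x : Fin r => rowIndex l x = rowIndex l b) := by
      simp
    refine mono_eq_on (Finset.univ.filter fun x : Fin r => rowIndex l x = rowIndex l b)
      (fun x => T (π''⁻¹ x)) (fun x => T (σ x)) ?_ ?_ ?_ b hbmem
    · intro a ha c hc hac
      simp only [Finset.mem_filter] at ha hc
      exact hss'' a c (ha.2.trans hc.2.symm) hac
    · intro a ha c hc hac
      simp only [Finset.mem_filter] at ha hc
      exact hrss a c (ha.2.trans hc.2.symm) hac
    · rw [map_perm_eq _ π''⁻¹ ?_ T, map_perm_eq _ σ ?_ T]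
      · intro x
        simp only [Finset.mem_filter, Finset.mem_univ, true_and]
        rw [hrow x]
      · intro x
        simp only [Finset.mem_filter, Finset.mem_univ, true_and]
        rw [young_inv hπ'' x]
end
end

section
/- For compositions λ, μ of r, the set of ascending row-semistandard generalized tableaux of shape λ and content μ is non-empty if and only if μ ⊴ λ in the dominance order, and this holds if and only if the standard tableau T_μ^λ is ascending. -/
open Equiv Finset

noncomputable section

section AuxProofs

variable {r : ℕ}

private lemma pS_mono (f : ℕ → ℕ) : Monotone (partialSum f) := fun _ _ h =>
  Finset.sum_le_sum_of_subset (Finset.range_subset_range.2 h)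

private lemma pS_le_total {f : ℕ → ℕ} (hf : IsCompositionOf f r) (e : ℕ) :
    partialSum f e ≤ r := by
  obtain ⟨hfin, hsum⟩ := hf
  have h1 : partialSum f e = ∑ j ∈ (Finset.range e).filter (fun j => f j ≠ 0), f j :=
    (Finset.sum_filter_ne_zero _).symm
  have h2 : (Finset.range e).filter (fun j => f j ≠ 0) ⊆ hfin.toFinset := by
    intro x hx
    simp only [Finset.mem_filter] at hx
    simpa using hx.2
  calc partialSum f e = _ := h1
    _ ≤ ∑ j ∈ hfin.toFinset, f j := Finset.sum_le_sum_of_subset h2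
    _ = r := by rw [← finsum_eq_sum f hfin, hsum]

private lemma total_le_pS {f : ℕ → ℕ} (hf : IsCompositionOf f r) :
    ∃ N, r ≤ partialSum f N := by
  obtain ⟨hfin, hsum⟩ := hf
  obtain ⟨N, hN⟩ := hfin.bddAbove
  refine ⟨N + 1, ?_⟩
  have h2 : hfin.toFinset ⊆ Finset.range (N + 1) := by
    intro x hx
    simp only [Set.Finite.mem_toFinset] at hx
    exact Finset.mem_range.2 (Nat.lt_succ_of_le (hN hx))
  calc r = ∑ j ∈ hfin.toFinset, f j := by rw [← finsum_eq_sum f hfin, hsum]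
    _ ≤ partialSum f (N + 1) := Finset.sum_le_sum_of_subset h2

private lemma rowSet_nonempty {f : ℕ → ℕ} (hf : IsCompositionOf f r) (b : Fin r) :
    {i : ℕ | (b : ℕ) < partialSum f (i + 1)}.Nonempty := by
  obtain ⟨N, hN⟩ := total_le_pS hf
  exact ⟨N, lt_of_lt_of_le (lt_of_lt_of_le b.isLt hN) (pS_mono f (Nat.le_succ N))⟩

private lemma lt_pS_rowIndex_succ {f : ℕ → ℕ} (hf : IsCompositionOf f r) (b : Fin r) :
    (b : ℕ) < partialSum f (rowIndex f b + 1) := Nat.sInf_mem (rowSet_nonempty hf b)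

private lemma rowIndex_le {f : ℕ → ℕ} {b : Fin r} {i : ℕ}
    (h : (b : ℕ) < partialSum f (i + 1)) : rowIndex f b ≤ i := Nat.sInf_le h

private lemma pS_rowIndex_le (f : ℕ → ℕ) (b : Fin r) :
    partialSum f (rowIndex f b) ≤ (b : ℕ) := by
  rcases h : rowIndex f b with _ | k
  · simp [partialSum]
  · have hk : k ∉ {i : ℕ | (b : ℕ) < partialSum f (i + 1)} :=
      Nat.notMem_of_lt_sInf (show k < sInf _ by
        rw [show sInf {i : ℕ | (b : ℕ) < partialSum f (i + 1)} = rowIndex f b from rfl, h]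
        omega)
    simp only [Set.mem_setOf_eq, not_lt] at hk
    exact hk

private lemma le_rowIndex {f : ℕ → ℕ} (hf : IsCompositionOf f r) {b : Fin r} {e : ℕ}
    (h : partialSum f e ≤ (b : ℕ)) : e ≤ rowIndex f b := by
  by_contra h'
  push_neg at h'
  have h1 := lt_pS_rowIndex_succ hf b
  have h2 : partialSum f (rowIndex f b + 1) ≤ partialSum f e := pS_mono f h'
  omega

private lemma rowIndex_mono {f : ℕ → ℕ} (hf : IsCompositionOf f r) {b₁ b₂ : Fin r}
    (h : b₁ ≤ b₂) : rowIndex f b₁ ≤ rowIndex f b₂ :=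
  rowIndex_le (lt_of_le_of_lt (show (b₁ : ℕ) ≤ (b₂ : ℕ) from h) (lt_pS_rowIndex_succ hf b₂))

private lemma hasContent_std {g : ℕ → ℕ} (hg : IsCompositionOf g r) :
    HasContent g (stdTableau (r := r) g) := by
  intro i
  have hiff : ∀ b : Fin r, stdTableau (r := r) g b = i ↔
      partialSum g i ≤ (b : ℕ) ∧ (b : ℕ) < partialSum g (i + 1) := by
    intro b
    constructor
    · rintro rfl
      exact ⟨pS_rowIndex_le g b, lt_pS_rowIndex_succ hg b⟩
    · rintro ⟨h1, h2⟩
      exact le_antisymm (rowIndex_le h2) (le_rowIndex hg h1)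
  have hinj : Set.InjOn (Fin.val)
      ((Finset.univ.filter (fun b : Fin r => stdTableau (r := r) g b = i)) : Set (Fin r)) :=
    fun x _ y _ h => Fin.val_injective h
  rw [← Finset.card_image_of_injOn hinj]
  have himg : (Finset.univ.filter (fun b : Fin r => stdTableau (r := r) g b = i)).image Fin.val
      = Finset.Ico (partialSum g i) (partialSum g (i + 1)) := by
    ext n
    simp only [Finset.mem_image, Finset.mem_filter, Finset.mem_univ, true_and, Finset.mem_Ico]
    constructor
    · rintro ⟨b, hb, rfl⟩
      exact (hiff b).1 hb
    · rintro ⟨h1, h2⟩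
      have hn : n < r := lt_of_lt_of_le h2 (pS_le_total hg (i + 1))
      exact ⟨⟨n, hn⟩, (hiff ⟨n, hn⟩).2 ⟨h1, h2⟩, rfl⟩
  rw [himg, Nat.card_Ico]
  have : partialSum g (i + 1) = partialSum g i + g i := Finset.sum_range_succ g i
  omega

private lemma domle_iff_asc {l g : ℕ → ℕ} (hl : IsCompositionOf l r) (hg : IsCompositionOf g r) :
    DomLE g l ↔ IsAscending l (stdTableau (r := r) g) := by
  constructor
  · intro hd b
    exact rowIndex_le (lt_of_lt_of_le (lt_pS_rowIndex_succ hg b) (hd _))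
  · intro ha e
    by_contra h
    push_neg at h
    have her : partialSum l e < r := lt_of_lt_of_le h (pS_le_total hg e)
    set b : Fin r := ⟨partialSum l e, her⟩ with hb
    have h1 : e ≤ rowIndex l b := le_rowIndex hl (le_refl _)
    have he0 : e ≠ 0 := by
      rintro rfl
      have h0 : partialSum l 0 = 0 := Finset.sum_range_zero l
      have h0' : partialSum g 0 = 0 := Finset.sum_range_zero g
      omega
    obtain ⟨k, rfl⟩ := Nat.exists_eq_succ_of_ne_zero he0
    have h2 : rowIndex g b ≤ k := rowIndex_le h
    have h3 := ha b
    simp only [stdTableau] at h3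
    omega

end AuxProofs

theorem statement6 (r : ℕ) (l g : ℕ → ℕ) (hl : IsCompositionOf l r) (hg : IsCompositionOf g r) :
    ((∃ T : Fin r → ℕ, HasContent g T ∧ IsRowSemistandard l T ∧ IsAscending l T) ↔ DomLE g l) ∧
    (DomLE g l ↔ IsAscending l (stdTableau (r := r) g)) := by
  have hiff2 : DomLE g l ↔ IsAscending l (stdTableau (r := r) g) := domle_iff_asc hl hg
  refine ⟨⟨?_, ?_⟩, hiff2⟩
  · rintro ⟨T, hc, _, ha⟩ e
    have hcard : (Finset.univ.filter (fun b : Fin r => T b < e)).card = partialSum g e := by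
      have hun : Finset.univ.filter (fun b : Fin r => T b < e) =
          (Finset.range e).biUnion (fun i => Finset.univ.filter (fun b : Fin r => T b = i)) := by
        ext b
        simp only [Finset.mem_filter, Finset.mem_univ, true_and, Finset.mem_biUnion,
          Finset.mem_range]
        exact ⟨fun h => ⟨T b, h, rfl⟩, fun ⟨i, hi, he⟩ => he ▸ hi⟩
      rw [hun, Finset.card_biUnion]
      · exact Finset.sum_congr rfl fun i _ => hc i
      · intro x _ y _ hxy
        simp only [Finset.disjoint_left, Finset.mem_filter, Finset.mem_univ, true_and]
        rintro b rfl h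
        exact hxy h
    have hsub : (Finset.univ.filter (fun b : Fin r => T b < e)) ⊆
        (Finset.univ.filter (fun b : Fin r => (b : ℕ) < partialSum l e)) := by
      intro b hb
      simp only [Finset.mem_filter, Finset.mem_univ, true_and] at hb ⊢
      have h1 : rowIndex l b + 1 ≤ e := lt_of_le_of_lt (ha b) hb
      exact lt_of_lt_of_le (lt_pS_rowIndex_succ hl b) (pS_mono l h1)
    have hb2 : (Finset.univ.filter (fun b : Fin r => (b : ℕ) < partialSum l e)).card ≤
        partialSum l e := by
      have hle := Finset.card_le_card_of_injOn
        (s := Finset.univ.filter (fun b : Fin r => (b : ℕ) < partialSum l e))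
        (t := Finset.range (partialSum l e))
        (fun b : Fin r => (b : ℕ))
        (fun b hb => by
          simp only [Finset.mem_coe, Finset.mem_filter, Finset.mem_univ, true_and] at hb
          exact Finset.mem_range.2 hb)
        (fun x _ y _ h => Fin.val_injective h)
      exact le_trans hle (le_of_eq (Finset.card_range _))
    calc partialSum g e = _ := hcard.symm
      _ ≤ (Finset.univ.filter (fun b : Fin r => (b : ℕ) < partialSum l e)).card :=
        Finset.card_le_card hsub
      _ ≤ partialSum l e := hb2
  · intro hd
    exact ⟨stdTableau (r := r) g, hasContent_std hg,
      fun b₁ b₂ _ h => rowIndex_mono hg h, hiff2.1 hd⟩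
end
end

section
/- For a partition λ of r, if the product x_μ · T_w · y_{λ'} is nonzero in the Hecke algebra for some w ∈ W and some composition μ with λ ◁ μ (strict dominance), then a contradiction arises; i.e., x_μ T_w y_{λ'} = 0 for all w ∈ W whenever λ ◁ μ. -/
open Equiv Finset

noncomputable section

namespace DJ


variable {r : ℕ}

lemma permLength_one : permLength (1 : Equiv.Perm (Fin r)) = 0 := by
  unfold permLength
  rw [Finset.card_eq_zero, Finset.filter_eq_empty_iff]
  rintro p - ⟨h1, h2⟩
  exact absurd h1 (asymm h2)

/-- order preserved by adjacent swap except at the pair itself -/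
lemma swap_val {i : ℕ} (h : i + 1 < r) (z : Fin r) :
    ((Equiv.swap ⟨i, Nat.lt_of_succ_lt h⟩ ⟨i + 1, h⟩ z : Fin r) : ℕ)
      = if (z : ℕ) = i then i + 1 else if (z : ℕ) = i + 1 then i else (z : ℕ) := by
  set a : Fin r := ⟨i, Nat.lt_of_succ_lt h⟩
  set b : Fin r := ⟨i + 1, h⟩
  rcases eq_or_ne z a with rfl | hza
  · rw [Equiv.swap_apply_left, if_pos rfl]
  · rcases eq_or_ne z b with rfl | hzb
    · rw [Equiv.swap_apply_right, if_neg (show ¬(i+1 = i) by omega), if_pos rfl]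
    · rw [Equiv.swap_apply_of_ne_of_ne hza hzb,
        if_neg (fun hc => hza (Fin.ext hc)), if_neg (fun hc => hzb (Fin.ext hc))]

lemma swap_adj_lt {i : ℕ} (h : i + 1 < r) {x y : Fin r} (hxy : x < y)
    (hne : ¬(x = ⟨i, Nat.lt_of_succ_lt h⟩ ∧ y = ⟨i + 1, h⟩)) :
    Equiv.swap ⟨i, Nat.lt_of_succ_lt h⟩ ⟨i + 1, h⟩ x
      < Equiv.swap ⟨i, Nat.lt_of_succ_lt h⟩ ⟨i + 1, h⟩ y := by
  have hvx : (x : ℕ) < (y : ℕ) := hxy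
  have hne' : ¬((x : ℕ) = i ∧ (y : ℕ) = i + 1) := by
    rintro ⟨h1, h2⟩; exact hne ⟨Fin.ext h1, Fin.ext h2⟩
  rw [Fin.lt_def, swap_val h, swap_val h]
  split_ifs <;> omega

lemma permLength_mul_swap {w : Equiv.Perm (Fin r)} {i : ℕ} (h : i + 1 < r)
    (ha : w ⟨i, Nat.lt_of_succ_lt h⟩ < w ⟨i + 1, h⟩) :
    permLength (w * Equiv.swap ⟨i, Nat.lt_of_succ_lt h⟩ ⟨i + 1, h⟩) = permLength w + 1 := by
  classical
  set a : Fin r := ⟨i, Nat.lt_of_succ_lt h⟩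
  set b : Fin r := ⟨i + 1, h⟩
  set s := Equiv.swap a b with hs
  have hss : ∀ x, s (s x) = x := fun x => Equiv.swap_apply_self _ _ _
  have hab : a < b := Fin.lt_def.2 (show i < i + 1 by omega)
  set A := Finset.univ.filter (fun p : Fin r × Fin r => p.1 < p.2 ∧ w p.2 < w p.1) with hA
  set B := Finset.univ.filter
    (fun p : Fin r × Fin r => p.1 < p.2 ∧ (w * s) p.2 < (w * s) p.1) with hB
  have hmem : ∀ p : Fin r × Fin r, p ∈ B ↔ p.1 < p.2 ∧ w (s p.2) < w (s p.1) := by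
    intro p; rw [hB, Finset.mem_filter]; simp [Equiv.Perm.mul_apply]
  have habB : (a, b) ∈ B := by
    rw [hmem]
    refine ⟨hab, ?_⟩
    simpa [hs, Equiv.swap_apply_left, Equiv.swap_apply_right] using ha
  have key : A.card = (B.erase (a, b)).card := by
    apply Finset.card_nbij' (i := fun p => (s p.1, s p.2)) (j := fun p => (s p.1, s p.2))
    · intro p hp
      simp only [Finset.mem_coe, hA, Finset.mem_filter, Finset.mem_univ, true_and] at hp
      obtain ⟨h1, h2⟩ := hp
      have hpne : ¬(p.1 = a ∧ p.2 = b) := by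
        rintro ⟨e1, e2⟩; rw [e1, e2] at h2; exact absurd ha (asymm h2)
      have hlt : s p.1 < s p.2 := swap_adj_lt h h1 hpne
      rw [Finset.mem_coe, Finset.mem_erase, hmem]
      refine ⟨?_, hlt, by rw [hss, hss]; exact h2⟩
      intro hc
      have h1' : s p.1 = a := congrArg Prod.fst hc
      have h2' : s p.2 = b := congrArg Prod.snd hc
      have e1 : p.1 = b := by rw [← hss p.1, h1']; exact Equiv.swap_apply_left _ _
      have e2 : p.2 = a := by rw [← hss p.2, h2']; exact Equiv.swap_apply_right _ _
      rw [e1, e2] at h1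
      exact absurd h1 (asymm hab)
    · intro p hp
      rw [Finset.mem_coe, Finset.mem_erase, hmem] at hp
      obtain ⟨hne, h1, h2⟩ := hp
      have hpne : ¬(p.1 = a ∧ p.2 = b) := by
        rintro ⟨h1', h2'⟩; exact hne (Prod.ext h1' h2')
      have hlt : s p.1 < s p.2 := swap_adj_lt h h1 hpne
      simp only [Finset.mem_coe, hA, Finset.mem_filter, Finset.mem_univ, true_and]
      exact ⟨hlt, h2⟩
    · intro p _; simp [hss]
    · intro p _; simp [hss]
  have : B.card = (B.erase (a, b)).card + 1 := by
    rw [Finset.card_erase_of_mem habB]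
    have : 0 < B.card := Finset.card_pos.2 ⟨_, habB⟩
    omega
  show B.card = A.card + 1
  omega


lemma permLength_mul_swap' {w : Equiv.Perm (Fin r)} {i : ℕ} (h : i + 1 < r)
    (ha : w ⟨i + 1, h⟩ < w ⟨i, Nat.lt_of_succ_lt h⟩) :
    permLength (w * Equiv.swap ⟨i, Nat.lt_of_succ_lt h⟩ ⟨i + 1, h⟩) + 1 = permLength w := by
  set a : Fin r := ⟨i, Nat.lt_of_succ_lt h⟩
  set b : Fin r := ⟨i + 1, h⟩
  set s := Equiv.swap a b with hs
  have h2 : (w * s) a < (w * s) b := by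
    simp only [Equiv.Perm.mul_apply, hs, Equiv.swap_apply_left, Equiv.swap_apply_right]
    exact ha
  have h3 := permLength_mul_swap (w := w * s) h h2
  rw [mul_assoc, show s * s = 1 from Equiv.swap_mul_self a b, mul_one] at h3
  omega

lemma permLength_inv (w : Equiv.Perm (Fin r)) : permLength w⁻¹ = permLength w := by
  classical
  apply Finset.card_nbij' (i := fun p : Fin r × Fin r => (w⁻¹ p.2, w⁻¹ p.1))
    (j := fun p : Fin r × Fin r => (w p.2, w p.1))
  · intro p hp
    simp only [Finset.mem_coe, Finset.mem_filter, Finset.mem_univ, true_and] at hp ⊢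
    refine ⟨hp.2, ?_⟩
    simpa using hp.1
  · intro p hp
    simp only [Finset.mem_coe, Finset.mem_filter, Finset.mem_univ, true_and] at hp ⊢
    refine ⟨hp.2, ?_⟩
    simpa using hp.1
  · intro p _; simp
  · intro p _; simp

lemma strictMono_of_adj {v : Fin r → Fin r}
    (h : ∀ (i : ℕ) (hi : i + 1 < r), v ⟨i, Nat.lt_of_succ_lt hi⟩ < v ⟨i + 1, hi⟩) :
    StrictMono v := by
  have key : ∀ k : ℕ, ∀ x y : Fin r, (y : ℕ) = (x : ℕ) + k + 1 → v x < v y := by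
    intro k
    induction k with
    | zero =>
      intro x y hy
      have h2 : (x : ℕ) + 1 < r := by have := y.isLt; omega
      have hyy : y = ⟨(x : ℕ) + 1, h2⟩ := by
        apply Fin.ext; show (y : ℕ) = (x : ℕ) + 1; omega
      rw [hyy]
      exact h x.val h2
    | succ k ih =>
      intro x y hy
      have hyr : (x : ℕ) + k + 1 < r := by have := y.isLt; omega
      set y' : Fin r := ⟨(x : ℕ) + k + 1, hyr⟩ with hy'
      have h1 : v x < v y' := ih x y' rfl
      have h3 : (y' : ℕ) + 1 < r := by have := y.isLt; simp [hy']; omega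
      have hyy : y = ⟨(y' : ℕ) + 1, h3⟩ := by
        apply Fin.ext; show (y : ℕ) = (x : ℕ) + k + 1 + 1; omega
      have h2' : v y' < v y := by
        rw [hyy]
        exact h y'.val h3
      exact h1.trans h2'
  intro x y hxy
  exact key ((y : ℕ) - (x : ℕ) - 1) x y (by have h4 : (x : ℕ) < (y : ℕ) := hxy; omega)

lemma perm_eq_one_of_adj_asc {v : Equiv.Perm (Fin r)}
    (h : ∀ (i : ℕ) (hi : i + 1 < r), v ⟨i, Nat.lt_of_succ_lt hi⟩ < v ⟨i + 1, hi⟩) :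
    v = 1 := by
  have hv : StrictMono v := strictMono_of_adj h
  have h1 : ⇑v = id := by
    apply (StrictMono.range_inj hv strictMono_id).1
    rw [Set.range_id, Set.range_eq_univ]
    exact v.surjective
  exact Equiv.ext fun x => (congrFun h1 x).trans rfl

lemma permLength_eq_zero_iff {v : Equiv.Perm (Fin r)} : permLength v = 0 ↔ v = 1 := by
  constructor
  · intro h0
    apply perm_eq_one_of_adj_asc
    intro i hi
    set x : Fin r := ⟨i, Nat.lt_of_succ_lt hi⟩
    set y : Fin r := ⟨i + 1, hi⟩
    have hxy : x < y := Fin.lt_def.2 (show i < i + 1 by omega)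
    rcases lt_trichotomy (v x) (v y) with h | h | h
    · exact h
    · exact absurd (v.injective h) (ne_of_lt hxy)
    · exfalso
      rw [permLength, Finset.card_eq_zero, Finset.filter_eq_empty_iff] at h0
      exact h0 (Finset.mem_univ (x, y)) ⟨hxy, h⟩
  · rintro rfl; exact permLength_one

lemma exists_descent {v : Equiv.Perm (Fin r)} (hv : v ≠ 1) :
    ∃ (i : ℕ) (h : i + 1 < r), v ⟨i + 1, h⟩ < v ⟨i, Nat.lt_of_succ_lt h⟩ := by
  by_contra hc
  push_neg at hc
  apply hv
  apply perm_eq_one_of_adj_asc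
  intro i hi
  rcases lt_trichotomy (v ⟨i, Nat.lt_of_succ_lt hi⟩) (v ⟨i + 1, hi⟩) with h | h | h
  · exact h
  · exact absurd (v.injective h) (fun hc' => by
      have : i = i + 1 := congrArg Fin.val hc'
      omega)
  · exact absurd h (not_lt.2 (hc i hi))

lemma permLength_simple {s : Equiv.Perm (Fin r)} (hs : IsSimpleTransposition s) :
    permLength s = 1 := by
  obtain ⟨i, h, rfl⟩ := hs
  have h2 := permLength_mul_swap (w := 1) h (by
    simp only [Equiv.Perm.one_apply]
    exact Fin.lt_def.2 (show i < i + 1 by omega))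
  rwa [one_mul, permLength_one] at h2

/-- trichotomy: right mult by a simple changes length by exactly 1 -/
lemma permLength_mul_simple (w : Equiv.Perm (Fin r)) {s : Equiv.Perm (Fin r)}
    (hs : IsSimpleTransposition s) :
    permLength (w * s) = permLength w + 1 ∨ permLength (w * s) + 1 = permLength w := by
  obtain ⟨i, h, rfl⟩ := hs
  set a : Fin r := ⟨i, Nat.lt_of_succ_lt h⟩
  set b : Fin r := ⟨i + 1, h⟩
  rcases lt_trichotomy (w a) (w b) with hlt | heq | hgt
  · exact Or.inl (permLength_mul_swap h hlt)
  · exact absurd (w.injective heq) (fun hc => by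
      have : (a : ℕ) = (b : ℕ) := congrArg Fin.val hc
      simp [a, b] at this)
  · exact Or.inr (permLength_mul_swap' h hgt)

/-- existence of reduced words -/
lemma exists_reduced_word (w : Equiv.Perm (Fin r)) :
    ∃ L : List (Equiv.Perm (Fin r)), (∀ s ∈ L, IsSimpleTransposition s) ∧
      L.prod = w ∧ L.length = permLength w := by
  generalize hn : permLength w = n
  induction n generalizing w with
  | zero =>
    refine ⟨[], by simp, ?_, rfl⟩
    simp [permLength_eq_zero_iff.1 hn]
  | succ n ih =>
    have hw : w ≠ 1 := fun hc => by rw [hc, permLength_one] at hn; omega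
    obtain ⟨i, h, hd⟩ := exists_descent hw
    set s := Equiv.swap (⟨i, Nat.lt_of_succ_lt h⟩ : Fin r) ⟨i + 1, h⟩ with hsdef
    have hss : IsSimpleTransposition s := ⟨i, h, rfl⟩
    have hlen : permLength (w * s) + 1 = permLength w := permLength_mul_swap' h hd
    obtain ⟨L, hL1, hL2, hL3⟩ := ih (w * s) (by omega)
    refine ⟨L ++ [s], ?_, ?_, ?_⟩
    · intro t ht
      rcases List.mem_append.1 ht with ht | ht
      · exact hL1 t ht
      · rw [List.mem_singleton.1 ht]; exact hss
    · rw [List.prod_append, hL2, List.prod_singleton, mul_assoc, hsdef,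
        Equiv.swap_mul_self, mul_one]
    · simp [hL3]

lemma permLength_mul_prod_le (L : List (Equiv.Perm (Fin r)))
    (hL : ∀ s ∈ L, IsSimpleTransposition s) (u : Equiv.Perm (Fin r)) :
    permLength (u * L.prod) ≤ permLength u + L.length := by
  induction L generalizing u with
  | nil => simp
  | cons s L ih =>
    have hs : IsSimpleTransposition s := hL s (by simp)
    have h1 : permLength (u * s) ≤ permLength u + 1 := by
      rcases permLength_mul_simple u hs with h | h <;> omega
    have h2 := ih (fun t ht => hL t (by simp [ht])) (u * s)
    calc permLength (u * (s :: L).prod) = permLength ((u * s) * L.prod) := by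
          rw [List.prod_cons, ← mul_assoc]
      _ ≤ permLength (u * s) + L.length := h2
      _ ≤ permLength u + (s :: L).length := by simp; omega

lemma permLength_mul_le (u v : Equiv.Perm (Fin r)) :
    permLength (u * v) ≤ permLength u + permLength v := by
  obtain ⟨L, hL1, hL2, hL3⟩ := exists_reduced_word v
  rw [← hL3, ← hL2]
  exact permLength_mul_prod_le L hL1 u


lemma permLength_swap_mul {w : Equiv.Perm (Fin r)} {i : ℕ} (h : i + 1 < r)
    (ha : w⁻¹ ⟨i, Nat.lt_of_succ_lt h⟩ < w⁻¹ ⟨i + 1, h⟩) :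
    permLength (Equiv.swap ⟨i, Nat.lt_of_succ_lt h⟩ ⟨i + 1, h⟩ * w) = permLength w + 1 := by
  set s := Equiv.swap (⟨i, Nat.lt_of_succ_lt h⟩ : Fin r) ⟨i + 1, h⟩ with hs
  have h1 := permLength_mul_swap (w := w⁻¹) h ha
  have h2 : (s * w)⁻¹ = w⁻¹ * s := by
    rw [mul_inv_rev, hs, Equiv.swap_inv]
  calc permLength (s * w) = permLength ((s * w)⁻¹) := (permLength_inv _).symm
    _ = permLength (w⁻¹ * s) := by rw [h2]
    _ = permLength w⁻¹ + 1 := h1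
    _ = permLength w + 1 := by rw [permLength_inv]

lemma permLength_swap_mul' {w : Equiv.Perm (Fin r)} {i : ℕ} (h : i + 1 < r)
    (ha : w⁻¹ ⟨i + 1, h⟩ < w⁻¹ ⟨i, Nat.lt_of_succ_lt h⟩) :
    permLength (Equiv.swap ⟨i, Nat.lt_of_succ_lt h⟩ ⟨i + 1, h⟩ * w) + 1 = permLength w := by
  set s := Equiv.swap (⟨i, Nat.lt_of_succ_lt h⟩ : Fin r) ⟨i + 1, h⟩ with hs
  have h1 := permLength_mul_swap' (w := w⁻¹) h ha
  have h2 : (s * w)⁻¹ = w⁻¹ * s := by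
    rw [mul_inv_rev, hs, Equiv.swap_inv]
  have h3 : permLength (s * w) = permLength (w⁻¹ * s) := by
    rw [← permLength_inv (s * w), h2]
  rw [h3, h1, permLength_inv]

lemma permLength_simple_mul (w : Equiv.Perm (Fin r)) {s : Equiv.Perm (Fin r)}
    (hs : IsSimpleTransposition s) :
    permLength (s * w) = permLength w + 1 ∨ permLength (s * w) + 1 = permLength w := by
  obtain ⟨i, h, rfl⟩ := hs
  set a : Fin r := ⟨i, Nat.lt_of_succ_lt h⟩
  set b : Fin r := ⟨i + 1, h⟩
  rcases lt_trichotomy (w⁻¹ a) (w⁻¹ b) with hlt | heq | hgt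
  · exact Or.inl (permLength_swap_mul h hlt)
  · exact absurd (w⁻¹.injective heq) (fun hc => by
      have : (a : ℕ) = (b : ℕ) := congrArg Fin.val hc
      simp [a, b] at this)
  · exact Or.inr (permLength_swap_mul' h hgt)

section Hecke

variable {R H : Type} [CommRing R] [Ring H] [Algebra R H]
variable (T : Equiv.Perm (Fin r) → H)

lemma T_mul_T (hone : T 1 = 1)
    (hmul₁ : ∀ w s : Equiv.Perm (Fin r), IsSimpleTransposition s →
      permLength (w * s) = permLength w + 1 → T w * T s = T (w * s)) :
    ∀ (n : ℕ) (u v : Equiv.Perm (Fin r)), permLength v ≤ n →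
      permLength (u * v) = permLength u + permLength v → T u * T v = T (u * v) := by
  intro n
  induction n with
  | zero =>
    intro u v hv _
    have : v = 1 := permLength_eq_zero_iff.1 (by omega)
    subst this
    rw [hone, mul_one, mul_one]
  | succ n ih =>
    intro u v hv hadd
    rcases eq_or_ne v 1 with rfl | hv1
    · rw [hone, mul_one, mul_one]
    · obtain ⟨i, h, hd⟩ := exists_descent hv1
      set s := Equiv.swap (⟨i, Nat.lt_of_succ_lt h⟩ : Fin r) ⟨i + 1, h⟩ with hsdef
      have hss : IsSimpleTransposition s := ⟨i, h, rfl⟩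
      set v' := v * s with hv'def
      have hvlen : permLength v' + 1 = permLength v := permLength_mul_swap' h hd
      have hv's : v' * s = v := by
        rw [hv'def, mul_assoc, hsdef, Equiv.swap_mul_self, mul_one]
      have huv' : permLength (u * v') = permLength u + permLength v' := by
        have hle : permLength (u * v') ≤ permLength u + permLength v' := permLength_mul_le u v'
        have h2 : u * v = (u * v') * s := by rw [mul_assoc, hv's]
        have h3 : permLength ((u * v') * s) ≤ permLength (u * v') + 1 := by
          rcases permLength_mul_simple (u * v') hss with hh | hh <;> omega
        rw [h2] at hadd
        omega
      have e1 : T v' * T s = T v := by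
        rw [← hv's]
        exact hmul₁ v' s hss (by rw [hv's]; omega)
      have e2 : T u * T v' = T (u * v') := ih u v' (by omega) huv'
      have e3 : T (u * v') * T s = T (u * v) := by
        have : (u * v') * s = u * v := by rw [mul_assoc, hv's]
        rw [← this]
        apply hmul₁ _ s hss
        rw [this]
        omega
      calc T u * T v = T u * (T v' * T s) := by rw [e1]
        _ = (T u * T v') * T s := by rw [mul_assoc]
        _ = T (u * v') * T s := by rw [e2]
        _ = T (u * v) := e3

lemma T_mul_T' (hone : T 1 = 1)
    (hmul₁ : ∀ w s : Equiv.Perm (Fin r), IsSimpleTransposition s →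
      permLength (w * s) = permLength w + 1 → T w * T s = T (w * s))
    {u v : Equiv.Perm (Fin r)}
    (hadd : permLength (u * v) = permLength u + permLength v) :
    T u * T v = T (u * v) :=
  T_mul_T T hone hmul₁ (permLength v) u v le_rfl hadd

/-- left multiplication by a simple in the descent case -/
lemma T_simple_mul_desc (q : R) (hone : T 1 = 1)
    (hmul₁ : ∀ w s : Equiv.Perm (Fin r), IsSimpleTransposition s →
      permLength (w * s) = permLength w + 1 → T w * T s = T (w * s))
    (hmul₂ : ∀ w s : Equiv.Perm (Fin r), IsSimpleTransposition s →
      permLength (w * s) + 1 = permLength w → T w * T s = q • T (w * s) + (q - 1) • T w)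
    {s u : Equiv.Perm (Fin r)} (hs : IsSimpleTransposition s)
    (hdesc : permLength (s * u) + 1 = permLength u) :
    T s * T u = q • T (s * u) + (q - 1) • T u := by
  have hs2 : s * s = 1 := by
    obtain ⟨i, h, rfl⟩ := hs
    exact Equiv.swap_mul_self _ _
  set u' := s * u with hu'
  have hsu' : s * u' = u := by rw [hu', ← mul_assoc, hs2, one_mul]
  have hlen : permLength (s * u') = permLength s + permLength u' := by
    rw [hsu', permLength_simple hs]
    omega
  have e1 : T s * T u' = T u := by rw [T_mul_T' T hone hmul₁ hlen, hsu']
  have hTss : T s * T s = q • (1 : H) + (q - 1) • T s := by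
    have := hmul₂ s s hs (by rw [hs2, permLength_one, permLength_simple hs])
    rwa [hs2, hone] at this
  calc T s * T u = T s * (T s * T u') := by rw [e1]
    _ = (T s * T s) * T u' := by rw [mul_assoc]
    _ = (q • (1 : H) + (q - 1) • T s) * T u' := by rw [hTss]
    _ = q • T u' + (q - 1) • (T s * T u') := by
        rw [add_mul, smul_mul_assoc, smul_mul_assoc, one_mul]
    _ = q • T (s * u) + (q - 1) • T u := by rw [e1, ← hu']

end Hecke


section Row

variable {f : ℕ → ℕ}

lemma partialSum_mono (f : ℕ → ℕ) {e e' : ℕ} (h : e ≤ e') : partialSum f e ≤ partialSum f e' :=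
  Finset.sum_le_sum_of_subset (Finset.range_subset_range.2 h)

lemma exists_comp_bound {r : ℕ} (hf : IsCompositionOf f r) :
    ∃ N, (∀ k, N ≤ k → f k = 0) ∧ (∀ e, N ≤ e → partialSum f e = r) := by
  obtain ⟨hfin, hsum⟩ := hf
  obtain ⟨N0, hN0⟩ := hfin.bddAbove
  refine ⟨N0 + 1, ?_, ?_⟩
  · intro k hk
    by_contra hc
    have : k ∈ Function.support f := hc
    have := hN0 this
    omega
  · intro e he
    rw [← hsum, partialSum]
    exact (finsum_eq_sum_of_support_subset f (fun k hk => by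
      have := hN0 hk
      simp only [Finset.coe_range, Set.mem_Iio]
      omega)).symm

lemma partialSum_le_total {r : ℕ} (hf : IsCompositionOf f r) (e : ℕ) :
    partialSum f e ≤ r := by
  obtain ⟨N, _, hN⟩ := exists_comp_bound hf
  calc partialSum f e ≤ partialSum f (max e N) := partialSum_mono f (le_max_left _ _)
    _ = r := hN _ (le_max_right _ _)

variable {r : ℕ} (hf : IsCompositionOf f r)
include hf

lemma rowIndex_spec (b : Fin r) :
    partialSum f (rowIndex f b) ≤ (b : ℕ) ∧ (b : ℕ) < partialSum f (rowIndex f b + 1) := by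
  obtain ⟨N, _, hN⟩ := exists_comp_bound hf
  have hne : {i : ℕ | (b : ℕ) < partialSum f (i + 1)}.Nonempty :=
    ⟨N, by simp only [Set.mem_setOf_eq, hN (N + 1) (by omega)]; exact b.isLt⟩
  have hmem := Nat.sInf_mem hne
  refine ⟨?_, hmem⟩
  rcases Nat.eq_zero_or_pos (rowIndex f b) with h0 | hpos
  · rw [h0]; simp [partialSum]
  · by_contra hc
    push_neg at hc
    have : rowIndex f b - 1 ∈ {i : ℕ | (b : ℕ) < partialSum f (i + 1)} := by
      simp only [Set.mem_setOf_eq]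
      calc (b : ℕ) < partialSum f (rowIndex f b) := hc
        _ ≤ partialSum f (rowIndex f b - 1 + 1) := partialSum_mono f (by omega)
    have h5 : rowIndex f b ≤ rowIndex f b - 1 := Nat.sInf_le this
    omega

lemma rowIndex_eq_iff {b : Fin r} {k : ℕ} :
    rowIndex f b = k ↔ partialSum f k ≤ (b : ℕ) ∧ (b : ℕ) < partialSum f (k + 1) := by
  constructor
  · rintro rfl; exact rowIndex_spec hf b
  · rintro ⟨h1, h2⟩
    have hle : rowIndex f b ≤ k := Nat.sInf_le h2
    have hspec := rowIndex_spec hf b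
    by_contra hc
    have hlt : rowIndex f b < k := by omega
    have : partialSum f (rowIndex f b + 1) ≤ partialSum f k := partialSum_mono f (by omega)
    omega

lemma rowIndex_mono {b b' : Fin r} (h : b ≤ b') : rowIndex f b ≤ rowIndex f b' := by
  apply Nat.sInf_le
  have hspec := rowIndex_spec hf b'
  simp only [Set.mem_setOf_eq]
  calc (b : ℕ) ≤ (b' : ℕ) := h
    _ < partialSum f (rowIndex f b' + 1) := hspec.2

lemma rowIndex_lt_iff {b : Fin r} {e : ℕ} :
    rowIndex f b < e ↔ (b : ℕ) < partialSum f e := by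
  constructor
  · intro h
    calc (b : ℕ) < partialSum f (rowIndex f b + 1) := (rowIndex_spec hf b).2
      _ ≤ partialSum f e := partialSum_mono f (by omega)
  · intro h
    have he : 1 ≤ e := by
      by_contra hc
      have : e = 0 := by omega
      rw [this] at h
      simp [partialSum] at h
    have : e - 1 ∈ {i : ℕ | (b : ℕ) < partialSum f (i + 1)} := by
      simp only [Set.mem_setOf_eq]
      calc (b : ℕ) < partialSum f e := h
        _ ≤ partialSum f (e - 1 + 1) := partialSum_mono f (by omega)
    have := Nat.sInf_le this
    rw [rowIndex]
    omega

/-- same row and between implies same row -/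
lemma rowIndex_eq_of_between {b₁ b₂ b : Fin r} (h12 : rowIndex f b₁ = rowIndex f b₂)
    (h1 : b₁ ≤ b) (h2 : b ≤ b₂) : rowIndex f b = rowIndex f b₁ := by
  have g1 := rowIndex_mono hf h1
  have g2 := rowIndex_mono hf h2
  omega

omit hf

lemma swap_mem_young {r : ℕ} {f : ℕ → ℕ} {i : ℕ} (h : i + 1 < r)
    (hrow : rowIndex f (⟨i, Nat.lt_of_succ_lt h⟩ : Fin r) = rowIndex f (⟨i + 1, h⟩ : Fin r)) :
    Equiv.swap (⟨i, Nat.lt_of_succ_lt h⟩ : Fin r) ⟨i + 1, h⟩ ∈ YoungSubgroup (r := r) f := by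
  intro b
  rcases eq_or_ne b (⟨i, Nat.lt_of_succ_lt h⟩ : Fin r) with rfl | h1
  · rw [Equiv.swap_apply_left, hrow]
  · rcases eq_or_ne b (⟨i + 1, h⟩ : Fin r) with rfl | h2
    · rw [Equiv.swap_apply_right, hrow]
    · rw [Equiv.swap_apply_of_ne_of_ne h1 h2]

lemma young_mul_mem {r : ℕ} {f : ℕ → ℕ} {u v : Equiv.Perm (Fin r)}
    (hu : u ∈ YoungSubgroup (r := r) f) (hv : v ∈ YoungSubgroup (r := r) f) :
    u * v ∈ YoungSubgroup (r := r) f := by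
  intro b
  rw [Equiv.Perm.mul_apply, hu, hv]

end Row


section Eigen

variable {R H : Type} [CommRing R] [Ring H] [Algebra R H]
variable (T : Equiv.Perm (Fin r) → H) (q : R)

lemma simple_ne_one {s : Equiv.Perm (Fin r)} (hs : IsSimpleTransposition s) : s ≠ 1 := by
  intro hc
  have h1 := permLength_simple hs
  rw [hc, permLength_one] at h1
  omega

lemma simple_mul_self {s : Equiv.Perm (Fin r)} (hs : IsSimpleTransposition s) : s * s = 1 := by
  obtain ⟨i, h, rfl⟩ := hs
  exact Equiv.swap_mul_self _ _

variable (hmul₁ : ∀ w s : Equiv.Perm (Fin r), IsSimpleTransposition s →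
      permLength (w * s) = permLength w + 1 → T w * T s = T (w * s))
    (hmul₂ : ∀ w s : Equiv.Perm (Fin r), IsSimpleTransposition s →
      permLength (w * s) + 1 = permLength w → T w * T s = q • T (w * s) + (q - 1) • T w)

include hmul₁ hmul₂ in
lemma x_eigen {f : ℕ → ℕ} {s : Equiv.Perm (Fin r)} (hs : IsSimpleTransposition s)
    (hsY : s ∈ YoungSubgroup (r := r) f) :
    (∑ u ∈ (Set.toFinite (YoungSubgroup (r := r) f)).toFinset, T u) * T s
      = q • ∑ u ∈ (Set.toFinite (YoungSubgroup (r := r) f)).toFinset, T u := by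
  classical
  rw [Finset.sum_mul, Finset.smul_sum, ← sub_eq_zero, ← Finset.sum_sub_distrib]
  have key : ∀ u, permLength (u * s) = permLength u + 1 →
      (T u * T s - q • T u) + (T (u * s) * T s - q • T (u * s)) = 0 := by
    intro u hasc
    have e1 : T u * T s = T (u * s) := hmul₁ u s hs hasc
    have huss : (u * s) * s = u := by rw [mul_assoc, simple_mul_self hs, mul_one]
    have e2 : T (u * s) * T s = q • T u + (q - 1) • T (u * s) := by
      have := hmul₂ (u * s) s hs (by rw [huss]; omega)
      rwa [huss] at this
    rw [e1, e2, sub_smul, one_smul]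
    abel
  apply Finset.sum_involution (g := fun u _ => u * s)
  · intro u hu
    rcases permLength_mul_simple u hs with hasc | hdesc
    · exact key u hasc
    · have huss : (u * s) * s = u := by rw [mul_assoc, simple_mul_self hs, mul_one]
      have h9 := key (u * s) (by rw [huss]; omega)
      rw [huss] at h9
      rw [add_comm]
      exact h9
  · intro u _ _ hc
    have h8 : u * s = u * 1 := by rw [mul_one]; exact hc
    exact simple_ne_one hs (mul_left_cancel h8)
  · intro u hu
    rw [Set.Finite.mem_toFinset] at hu ⊢
    exact young_mul_mem hu hsY
  · intro u _
    rw [mul_assoc, simple_mul_self hs, mul_one]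

variable (hone : T 1 = 1)

include hone hmul₁ hmul₂ in
lemma y_eigen {c : Rˣ} (hcq : (c : R) * q = -1) {f : ℕ → ℕ} {s : Equiv.Perm (Fin r)}
    (hs : IsSimpleTransposition s) (hsY : s ∈ YoungSubgroup (r := r) f) :
    T s * (∑ u ∈ (Set.toFinite (YoungSubgroup (r := r) f)).toFinset,
        ((c ^ permLength u : Rˣ) : R) • T u)
      = - ∑ u ∈ (Set.toFinite (YoungSubgroup (r := r) f)).toFinset,
          ((c ^ permLength u : Rˣ) : R) • T u := by
  classical
  have hss : s * s = 1 := simple_mul_self hs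
  have main : ∑ u ∈ (Set.toFinite (YoungSubgroup (r := r) f)).toFinset,
      (((c ^ permLength u : Rˣ) : R) • (T s * T u)
        + ((c ^ permLength u : Rˣ) : R) • T u) = 0 := by
    have key : ∀ u : Equiv.Perm (Fin r), permLength (s * u) = permLength u + 1 →
        (((c ^ permLength u : Rˣ) : R) • (T s * T u)
          + ((c ^ permLength u : Rˣ) : R) • T u)
        + (((c ^ permLength (s * u) : Rˣ) : R) • (T s * T (s * u))
          + ((c ^ permLength (s * u) : Rˣ) : R) • T (s * u)) = 0 := by
      intro u hasc
      have hssu : s * (s * u) = u := by rw [← mul_assoc, hss, one_mul]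
      have e1 : T s * T u = T (s * u) := by
        rw [T_mul_T' T hone hmul₁ (by rw [hasc, permLength_simple hs]; omega)]
      have e2 : T s * T (s * u) = q • T u + (q - 1) • T (s * u) := by
        have := T_simple_mul_desc T q hone hmul₁ hmul₂ hs
          (u := s * u) (by rw [hssu]; omega)
        rwa [hssu] at this
      set A : R := ((c ^ permLength u : Rˣ) : R) with hA
      have hB : ((c ^ permLength (s * u) : Rˣ) : R) = A * (c : R) := by
        rw [hasc, pow_succ, Units.val_mul]
      rw [e1, e2, hB]
      set X := T u
      set Y := T (s * u)
      have hBq : A * (c : R) * q = -A := by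
        rw [mul_assoc, hcq, mul_neg_one]
      have h3 : A * (c : R) * (q - 1) = -A - A * (c : R) := by
        linear_combination hBq
      rw [smul_add, smul_smul, smul_smul, hBq, h3, sub_smul, neg_smul, neg_smul]
      abel
    apply Finset.sum_involution (g := fun u _ => s * u)
    · intro u hu
      rcases permLength_simple_mul u hs with hasc | hdesc
      · exact key u hasc
      · have hssu : s * (s * u) = u := by rw [← mul_assoc, hss, one_mul]
        have h9 := key (s * u) (by rw [hssu]; omega)
        rw [hssu] at h9
        rw [add_comm]
        exact h9
    · intro u _ _ hc
      have h8 : s * u = 1 * u := by rw [one_mul]; exact hc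
      exact simple_ne_one hs (mul_right_cancel h8)
    · intro u hu
      rw [Set.Finite.mem_toFinset] at hu ⊢
      exact young_mul_mem hsY hu
    · intro u _
      rw [← mul_assoc, hss, one_mul]
  rw [Finset.sum_add_distrib] at main
  have hL : T s * (∑ u ∈ (Set.toFinite (YoungSubgroup (r := r) f)).toFinset,
      ((c ^ permLength u : Rˣ) : R) • T u)
      = ∑ u ∈ (Set.toFinite (YoungSubgroup (r := r) f)).toFinset,
        ((c ^ permLength u : Rˣ) : R) • (T s * T u) := by
    rw [Finset.mul_sum]
    exact Finset.sum_congr rfl fun u _ => mul_smul_comm _ _ _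
  rw [hL]
  exact eq_neg_of_add_eq_zero_left main

include hmul₁ hone in
lemma y_factor (c : Rˣ) {f : ℕ → ℕ} {t : Equiv.Perm (Fin r)}
    (ht : IsSimpleTransposition t) (htY : t ∈ YoungSubgroup (r := r) f) :
    ∑ u ∈ (Set.toFinite (YoungSubgroup (r := r) f)).toFinset,
        ((c ^ permLength u : Rˣ) : R) • T u
      = (∑ e ∈ (Set.toFinite (YoungSubgroup (r := r) f)).toFinset.filter
            (fun v => permLength v < permLength (t * v)),
          ((c ^ permLength e : Rˣ) : R) • T e)
        + (c : R) • (T t * ∑ e ∈ (Set.toFinite (YoungSubgroup (r := r) f)).toFinset.filter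
            (fun v => permLength v < permLength (t * v)),
          ((c ^ permLength e : Rˣ) : R) • T e) := by
  classical
  have htt : t * t = 1 := simple_mul_self ht
  set WF := (Set.toFinite (YoungSubgroup (r := r) f)).toFinset with hWF
  set D := WF.filter (fun v => permLength v < permLength (t * v)) with hD
  have hDasc : ∀ e ∈ D, permLength (t * e) = permLength e + 1 := by
    intro e he
    rw [hD, Finset.mem_filter] at he
    rcases permLength_simple_mul e ht with h | h
    · exact h
    · omega
  have hDsub : D ⊆ WF := Finset.filter_subset _ _
  have himg : WF \ D = D.image (fun e => t * e) := by
    ext v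
    constructor
    · intro hv
      rw [Finset.mem_sdiff] at hv
      obtain ⟨hv1, hv2⟩ := hv
      rcases permLength_simple_mul v ht with hasc | hdesc
      · exfalso
        apply hv2
        rw [hD, Finset.mem_filter]
        exact ⟨hv1, by omega⟩
      · rw [Finset.mem_image]
        refine ⟨t * v, ?_, by rw [← mul_assoc, htt, one_mul]⟩
        rw [hD, Finset.mem_filter]
        constructor
        · rw [hWF, Set.Finite.mem_toFinset] at hv1 ⊢
          exact young_mul_mem htY hv1
        · have : t * (t * v) = v := by rw [← mul_assoc, htt, one_mul]
          rw [this]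
          omega
    · intro hv
      rw [Finset.mem_image] at hv
      obtain ⟨e, he, rfl⟩ := hv
      have hasc := hDasc e he
      rw [Finset.mem_sdiff]
      constructor
      · have he' := hDsub he
        rw [hWF, Set.Finite.mem_toFinset] at he' ⊢
        exact young_mul_mem htY he'
      · rw [hD, Finset.mem_filter]
        rintro ⟨-, hlt⟩
        have : t * (t * e) = e := by rw [← mul_assoc, htt, one_mul]
        rw [this] at hlt
        omega
  have hsum : ∑ u ∈ WF \ D, ((c ^ permLength u : Rˣ) : R) • T u
      = ∑ e ∈ D, ((c ^ permLength (t * e) : Rˣ) : R) • T (t * e) := by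
    rw [himg, Finset.sum_image]
    intro a _ b _ hab
    exact mul_left_cancel hab
  have hterm : ∀ e ∈ D, ((c ^ permLength (t * e) : Rˣ) : R) • T (t * e)
      = (c : R) • (T t * (((c ^ permLength e : Rˣ) : R) • T e)) := by
    intro e he
    have hasc := hDasc e he
    have hTmul : T t * T e = T (t * e) := by
      rw [T_mul_T' T hone hmul₁ (by rw [hasc, permLength_simple ht]; omega)]
    rw [mul_smul_comm, hTmul, smul_smul, hasc, pow_succ, Units.val_mul, mul_comm]
  calc ∑ u ∈ WF, ((c ^ permLength u : Rˣ) : R) • T u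
      = ∑ u ∈ WF \ D, ((c ^ permLength u : Rˣ) : R) • T u
        + ∑ e ∈ D, ((c ^ permLength e : Rˣ) : R) • T e := (Finset.sum_sdiff hDsub).symm
    _ = ∑ e ∈ D, ((c ^ permLength e : Rˣ) : R) • T e
        + ∑ e ∈ D, ((c ^ permLength (t * e) : Rˣ) : R) • T (t * e) := by
          rw [hsum, add_comm]
    _ = _ := by
          rw [Finset.mul_sum, Finset.smul_sum]
          congr 1
          exact Finset.sum_congr rfl hterm

end Eigen


section Counting

lemma filter_lt_range (m e : ℕ) :
    (Finset.range e).filter (fun j => j + 1 ≤ m) = Finset.range (min m e) := by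
  ext j
  simp only [Finset.mem_filter, Finset.mem_range, Nat.lt_min]
  omega

lemma conjFn_eq_card {l : ℕ → ℕ} {N : ℕ} (hN : ∀ k, N ≤ k → l k = 0) (j : ℕ) :
    conjFn l j = ((Finset.range N).filter (fun k => j + 1 ≤ l k)).card := by
  have hset : {k : ℕ | j + 1 ≤ l k} = ↑((Finset.range N).filter (fun k => j + 1 ≤ l k)) := by
    ext k
    simp only [Set.mem_setOf_eq, Finset.coe_filter, Finset.mem_range]
    constructor
    · intro hk
      refine ⟨?_, hk⟩
      by_contra hc
      have := hN k (by omega)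
      omega
    · rintro ⟨-, hk⟩; exact hk
  rw [conjFn, hset, Nat.card_coe_set_eq, Set.ncard_coe_finset]

lemma conj_partialSum {l : ℕ → ℕ} {N : ℕ} (hN : ∀ k, N ≤ k → l k = 0) (e : ℕ) :
    partialSum (conjFn l) e = ∑ k ∈ Finset.range N, min (l k) e := by
  rw [partialSum]
  calc ∑ j ∈ Finset.range e, conjFn l j
      = ∑ j ∈ Finset.range e, ((Finset.range N).filter (fun k => j + 1 ≤ l k)).card := by
        exact Finset.sum_congr rfl fun j _ => conjFn_eq_card hN j
    _ = ∑ j ∈ Finset.range e, ∑ k ∈ Finset.range N, if j + 1 ≤ l k then 1 else 0 := by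
        exact Finset.sum_congr rfl fun j _ => by rw [Finset.card_filter]
    _ = ∑ k ∈ Finset.range N, ∑ j ∈ Finset.range e, if j + 1 ≤ l k then 1 else 0 :=
        Finset.sum_comm
    _ = ∑ k ∈ Finset.range N, min (l k) e := by
        refine Finset.sum_congr rfl fun k _ => ?_
        rw [← Finset.card_filter, filter_lt_range, Finset.card_range]

lemma single_le_total {l : ℕ → ℕ} {r : ℕ} (hl : IsCompositionOf l r) (k : ℕ) : l k ≤ r := by
  have h1 : l k ≤ partialSum l (k + 1) := by
    rw [partialSum, Finset.sum_range_succ]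
    omega
  exact h1.trans (partialSum_le_total hl _)

lemma conj_comp {l : ℕ → ℕ} {r : ℕ} (hl : IsCompositionOf l r) :
    IsCompositionOf (conjFn l) r := by
  obtain ⟨N, hN, hNs⟩ := exists_comp_bound hl
  have hsupp : Function.support (conjFn l) ⊆ ↑(Finset.range r) := by
    intro j hj
    simp only [Finset.coe_range, Set.mem_Iio]
    by_contra hc
    apply hj
    rw [conjFn_eq_card hN j]
    rw [Finset.card_eq_zero, Finset.filter_eq_empty_iff]
    intro k _
    have := single_le_total hl k
    omega
  constructor
  · exact (Finset.range r).finite_toSet.subset hsupp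
  · rw [finsum_eq_sum_of_support_subset _ hsupp]
    have h1 : ∑ j ∈ Finset.range r, conjFn l j = partialSum (conjFn l) r := rfl
    rw [h1, conj_partialSum hN]
    have h2 : ∀ k ∈ Finset.range N, min (l k) r = l k := fun k _ => by
      have := single_le_total hl k
      omega
    rw [Finset.sum_congr rfl h2]
    have h3 : partialSum l N = r := hNs N le_rfl
    exact h3

/-- number of boxes with fewer than `e` boxes before them in their row, bounded -/
lemma count_pos_lt {g : ℕ → ℕ} {r : ℕ} (hg : IsCompositionOf g r) {N : ℕ}
    (hNs : ∀ e, N ≤ e → partialSum g e = r) (e : ℕ) :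
    (Finset.univ.filter
        (fun b : Fin r => (b : ℕ) - partialSum g (rowIndex g b) < e)).card
      ≤ ∑ k ∈ Finset.range N, min (g k) e := by
  classical
  rw [Finset.card_eq_sum_card_fiberwise
    (f := fun b : Fin r => rowIndex g b) (t := Finset.range N) (fun b _ => by
      simp only [Finset.mem_coe, Finset.mem_range]
      rw [rowIndex_lt_iff hg, hNs N le_rfl]
      exact b.isLt)]
  apply Finset.sum_le_sum
  intro k _
  rw [← Finset.card_range (min (g k) e)]
  apply Finset.card_le_card_of_injOn (f := fun b : Fin r => (b : ℕ) - partialSum g k)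
  · intro b hb
    simp only [Finset.mem_coe, Finset.mem_filter, Finset.mem_univ, true_and] at hb
    obtain ⟨hb1, hb2⟩ := hb
    simp only [Finset.mem_coe, Finset.mem_range]
    subst hb2
    have hspec := rowIndex_spec hg b
    have hsucc : partialSum g (rowIndex g b + 1) = partialSum g (rowIndex g b) + g (rowIndex g b) := by
      rw [partialSum, partialSum, Finset.sum_range_succ]
    omega
  · intro b1 hb1 b2 hb2 heq
    simp only [Finset.coe_filter, Set.mem_setOf_eq, Finset.mem_univ, true_and] at hb1 hb2
    dsimp only at heq
    have h1 := (rowIndex_spec hg b1).1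
    have h2 := (rowIndex_spec hg b2).1
    rw [hb1.2] at h1
    rw [hb2.2] at h2
    apply Fin.ext
    omega

lemma count_val_lt {r M : ℕ} (hM : M ≤ r) :
    (Finset.univ.filter (fun b : Fin r => (b : ℕ) < M)).card = M := by
  classical
  rcases Nat.eq_zero_or_pos M with rfl | hMpos
  · rw [Finset.card_eq_zero, Finset.filter_eq_empty_iff]
    intro b _
    omega
  have hr : 1 ≤ r := le_trans hMpos hM
  have h : (Finset.univ.filter (fun b : Fin r => (b : ℕ) < M)).card = (Finset.range M).card := by
    refine Finset.card_nbij' (fun b => (b : ℕ))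
      (fun n => (⟨min n (r - 1), by omega⟩ : Fin r)) ?_ ?_ ?_ ?_
    · intro b hb
      simp only [Finset.mem_coe, Finset.mem_filter, Finset.mem_univ, true_and] at hb
      rwa [Finset.mem_coe, Finset.mem_range]
    · intro n hn
      rw [Finset.mem_coe, Finset.mem_range] at hn
      simp only [Finset.mem_coe, Finset.mem_filter, Finset.mem_univ, true_and]
      show min n (r - 1) < M
      omega
    · intro b hb
      simp only [Finset.mem_coe, Finset.mem_filter, Finset.mem_univ, true_and] at hb
      apply Fin.ext
      show min (b : ℕ) (r - 1) = (b : ℕ)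
      have := b.isLt
      omega
    · intro n hn
      rw [Finset.mem_coe, Finset.mem_range] at hn
      show min n (r - 1) = n
      omega
  rw [h, Finset.card_range]

lemma domle_antisymm {l g : ℕ → ℕ} (h1 : DomLE l g) (h2 : DomLE g l) : l = g := by
  funext k
  have a1 : partialSum l k = partialSum g k := le_antisymm (h1 k) (h2 k)
  have a2 : partialSum l (k + 1) = partialSum g (k + 1) := le_antisymm (h1 _) (h2 _)
  rw [partialSum, partialSum, Finset.sum_range_succ, Finset.sum_range_succ] at a2
  rw [partialSum, partialSum] at a1
  omega

/-- the key dominance deduction -/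
lemma mins_imp_dom {l g : ℕ → ℕ} {r N : ℕ} (hl : IsCompositionOf l r) (hlp : Antitone l)
    (hg : IsCompositionOf g r)
    (hNl : ∀ e, N ≤ e → partialSum l e = r) (hNg : ∀ e, N ≤ e → partialSum g e = r)
    (hmins : ∀ e, ∑ k ∈ Finset.range N, min (l k) e ≤ ∑ k ∈ Finset.range N, min (g k) e) :
    DomLE g l := by
  intro e
  rcases le_or_gt N e with hNe | heN
  · rw [hNl e hNe, hNg e hNe]
  · rcases Nat.eq_zero_or_pos e with rfl | hepos
    · simp [partialSum]
    set a := l (e - 1) with ha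
    -- l: exact computation
    have hmono_l : ∀ k, k < e → a ≤ l k := fun k hk => hlp (by omega)
    have hmono_l' : ∀ k, e ≤ k → l k ≤ a := fun k hk => hlp (by omega)
    have hL1 : ∑ k ∈ Finset.range e, min (l k) a = e * a := by
      rw [Finset.sum_congr rfl (fun k hk => by
        rw [Finset.mem_range] at hk
        have := hmono_l k hk
        omega : ∀ k ∈ Finset.range e, min (l k) a = a)]
      rw [Finset.sum_const, Finset.card_range, smul_eq_mul]
    have hsplit_l : ∑ k ∈ Finset.range N, min (l k) a
        = ∑ k ∈ Finset.range e, min (l k) a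
          + ∑ k ∈ Finset.Ico e N, min (l k) a := by
      rw [← Finset.sum_range_add_sum_Ico _ (le_of_lt heN)]
    have hIco_l : ∑ k ∈ Finset.Ico e N, min (l k) a = ∑ k ∈ Finset.Ico e N, l k := by
      refine Finset.sum_congr rfl fun k hk => ?_
      rw [Finset.mem_Ico] at hk
      have := hmono_l' k hk.1
      omega
    have htot_l : partialSum l e + ∑ k ∈ Finset.Ico e N, l k = r := by
      rw [partialSum, Finset.sum_range_add_sum_Ico _ (le_of_lt heN)]
      exact hNl N le_rfl
    -- g : inequality
    have hg_split : ∀ k, g k = min (g k) a + (g k - a) := fun k => by omega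
    have hG1 : partialSum g e = ∑ k ∈ Finset.range e, min (g k) a
        + ∑ k ∈ Finset.range e, (g k - a) := by
      rw [partialSum, ← Finset.sum_add_distrib]
      exact Finset.sum_congr rfl fun k _ => hg_split k
    have hG2 : ∑ k ∈ Finset.range e, min (g k) a ≤ e * a := by
      calc ∑ k ∈ Finset.range e, min (g k) a ≤ ∑ _k ∈ Finset.range e, a :=
            Finset.sum_le_sum fun k _ => min_le_right _ _
        _ = e * a := by rw [Finset.sum_const, Finset.card_range, smul_eq_mul]
    have hG3 : ∑ k ∈ Finset.range e, (g k - a) ≤ ∑ k ∈ Finset.range N, (g k - a) :=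
      Finset.sum_le_sum_of_subset (Finset.range_subset_range.2 (le_of_lt heN))
    have hG4 : ∑ k ∈ Finset.range N, min (g k) a + ∑ k ∈ Finset.range N, (g k - a)
        = partialSum g N := by
      rw [← Finset.sum_add_distrib]
      exact (Finset.sum_congr rfl fun k _ => (hg_split k).symm)
    have hGN : partialSum g N = r := hNg N le_rfl
    have hmins_a := hmins a
    have hea : e * a ≤ partialSum l e := by
      rw [partialSum]
      calc e * a = ∑ _k ∈ Finset.range e, a := by
            rw [Finset.sum_const, Finset.card_range, smul_eq_mul]
        _ ≤ ∑ k ∈ Finset.range e, l k :=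
            Finset.sum_le_sum fun k hk => hmono_l k (Finset.mem_range.1 hk)
    omega

end Counting


section Step

variable {g lam : ℕ → ℕ}

/-- positions within rows are bounded by columns, under the case-3b hypotheses -/
lemma pos_le_col (hg : IsCompositionOf g r) (hlam : IsCompositionOf lam r)
    (w : Equiv.Perm (Fin r))
    (hc1 : ∀ (i : ℕ) (hi : i + 1 < r),
      rowIndex g (⟨i, Nat.lt_of_succ_lt hi⟩ : Fin r) = rowIndex g (⟨i + 1, hi⟩ : Fin r) →
      w⁻¹ (⟨i, Nat.lt_of_succ_lt hi⟩ : Fin r) < w⁻¹ (⟨i + 1, hi⟩ : Fin r))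
    (hc3 : ∀ (i : ℕ) (hi : i + 1 < r),
      rowIndex g (⟨i, Nat.lt_of_succ_lt hi⟩ : Fin r) = rowIndex g (⟨i + 1, hi⟩ : Fin r) →
      rowIndex lam (w⁻¹ (⟨i, Nat.lt_of_succ_lt hi⟩ : Fin r))
        ≠ rowIndex lam (w⁻¹ (⟨i + 1, hi⟩ : Fin r))) :
    ∀ b : Fin r, (b : ℕ) - partialSum g (rowIndex g b) ≤ rowIndex lam (w⁻¹ b) := by
  have main : ∀ n (b : Fin r), (b : ℕ) ≤ n →
      (b : ℕ) - partialSum g (rowIndex g b) ≤ rowIndex lam (w⁻¹ b) := by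
    intro n
    induction n with
    | zero =>
      intro b hb
      omega
    | succ n ihn =>
      intro b hb
      rcases Nat.eq_zero_or_pos ((b : ℕ) - partialSum g (rowIndex g b)) with hz | hpos
      · omega
      have hspec := rowIndex_spec hg b
      have hb1 : 1 ≤ (b : ℕ) := by omega
      set i := (b : ℕ) - 1 with hidef
      have hi : i + 1 < r := by have := b.isLt; omega
      set b' : Fin r := ⟨i, Nat.lt_of_succ_lt hi⟩ with hb'def
      have hbmk : b = ⟨i + 1, hi⟩ := Fin.ext (show (b : ℕ) = i + 1 by omega)
      have hrow' : rowIndex g b' = rowIndex g b := by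
        apply (rowIndex_eq_iff hg).2
        constructor
        · show partialSum g (rowIndex g b) ≤ i
          omega
        · show (i : ℕ) < partialSum g (rowIndex g b + 1)
          omega
      have hrowmk : rowIndex g (⟨i, Nat.lt_of_succ_lt hi⟩ : Fin r)
          = rowIndex g (⟨i + 1, hi⟩ : Fin r) := by
        rw [← hb'def, ← hbmk, hrow']
      have hlt := hc1 i hi hrowmk
      have hne := hc3 i hi hrowmk
      rw [← hbmk] at hlt hne
      rw [← hb'def] at hlt hne
      have hmono := rowIndex_mono hlam (le_of_lt hlt)
      have hcol : rowIndex lam (w⁻¹ b') < rowIndex lam (w⁻¹ b) := by omega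
      have hih := ihn b' (by show i ≤ n; omega)
      rw [hrow'] at hih
      have hb'v : (b' : ℕ) = i := rfl
      omega
  intro b
  exact main (b : ℕ) b le_rfl

/-- the increasing chain along a row -/
lemma chain_lemma (hlam : IsCompositionOf lam r) (w : Equiv.Perm (Fin r))
    (hc2 : ∀ (j : ℕ) (hj : j + 1 < r),
      rowIndex lam (⟨j, Nat.lt_of_succ_lt hj⟩ : Fin r) = rowIndex lam (⟨j + 1, hj⟩ : Fin r) →
      w (⟨j, Nat.lt_of_succ_lt hj⟩ : Fin r) < w (⟨j + 1, hj⟩ : Fin r))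
    {a b : Fin r} (hab : a < b) (hrow : rowIndex lam a = rowIndex lam b) :
    (w a : ℕ) + ((b : ℕ) - (a : ℕ)) ≤ (w b : ℕ) := by
  have habv : (a : ℕ) < (b : ℕ) := hab
  have claim : ∀ m, m ≤ (b : ℕ) - (a : ℕ) → ∀ (hm : (a : ℕ) + m < r),
      (w a : ℕ) + m ≤ (w (⟨(a : ℕ) + m, hm⟩ : Fin r) : ℕ) := by
    intro m
    induction m with
    | zero =>
      intro _ hm
      have : (⟨(a : ℕ) + 0, hm⟩ : Fin r) = a := Fin.ext (show (a : ℕ) + 0 = (a : ℕ) by omega)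
      rw [this]
      omega
    | succ m ihm =>
      intro hmle hm
      have hj : (a : ℕ) + m + 1 < r := by omega
      have h1 := ihm (by omega) (Nat.lt_of_succ_lt hj)
      -- same rows
      have hrowa : rowIndex lam (⟨(a : ℕ) + m, Nat.lt_of_succ_lt hj⟩ : Fin r)
          = rowIndex lam a := by
        apply rowIndex_eq_of_between hlam hrow
        · show a ≤ (⟨(a : ℕ) + m, Nat.lt_of_succ_lt hj⟩ : Fin r)
          show (a : ℕ) ≤ (a : ℕ) + m
          omega
        · show (a : ℕ) + m ≤ (b : ℕ)
          omega
      have hrowb : rowIndex lam (⟨(a : ℕ) + m + 1, hj⟩ : Fin r) = rowIndex lam a := by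
        apply rowIndex_eq_of_between hlam hrow
        · show (a : ℕ) ≤ (a : ℕ) + m + 1
          omega
        · show (a : ℕ) + m + 1 ≤ (b : ℕ)
          omega
      have heq : rowIndex lam (⟨(a : ℕ) + m, Nat.lt_of_succ_lt hj⟩ : Fin r)
          = rowIndex lam (⟨(a : ℕ) + m + 1, hj⟩ : Fin r) := by rw [hrowa, hrowb]
      have h2 := hc2 ((a : ℕ) + m) hj heq
      have h2v : (w (⟨(a : ℕ) + m, Nat.lt_of_succ_lt hj⟩ : Fin r) : ℕ)
          < (w (⟨(a : ℕ) + m + 1, hj⟩ : Fin r) : ℕ) := h2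
      have : (⟨(a : ℕ) + (m + 1), hm⟩ : Fin r) = (⟨(a : ℕ) + m + 1, hj⟩ : Fin r) :=
        Fin.ext (show (a : ℕ) + (m + 1) = (a : ℕ) + m + 1 by omega)
      rw [this]
      omega
  have hfin := claim ((b : ℕ) - (a : ℕ)) le_rfl (by have := b.isLt; omega)
  have : (⟨(a : ℕ) + ((b : ℕ) - (a : ℕ)), by have := b.isLt; omega⟩ : Fin r) = b :=
    Fin.ext (show (a : ℕ) + ((b : ℕ) - (a : ℕ)) = (b : ℕ) by omega)
  rw [this] at hfin
  exact hfin

end Step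


end DJ

open DJ

theorem statement14 {R : Type} [CommRing R] [IsDomain R] (q : R) (hq : IsUnit q)
    {r : ℕ} {H : Type} [Ring H] [Algebra R H]
    (T : Equiv.Perm (Fin r) → H)
    (hbasis : LinearIndependent R T)
    (hspan : Submodule.span R (Set.range T) = ⊤)
    (hone : T 1 = 1)
    (hmul₁ : ∀ w s : Equiv.Perm (Fin r), IsSimpleTransposition s →
      permLength (w * s) = permLength w + 1 → T w * T s = T (w * s))
    (hmul₂ : ∀ w s : Equiv.Perm (Fin r), IsSimpleTransposition s →
      permLength (w * s) + 1 = permLength w → T w * T s = q • T (w * s) + (q - 1) • T w)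
    (l g : ℕ → ℕ) (hl : IsCompositionOf l r) (hlp : Antitone l)
    (hg : IsCompositionOf g r) (hdom : DomLE l g) (hne : l ≠ g)
    (w : Equiv.Perm (Fin r)) :
    (∑ᶠ u ∈ YoungSubgroup (r := r) g, T u) * T w *
      (∑ᶠ u ∈ YoungSubgroup (r := r) (conjFn l),
        ((((-hq.unit)⁻¹ ^ permLength u : Rˣ) : R)) • T u) = 0 := by
  classical
  set c : Rˣ := (-hq.unit)⁻¹ with hcdef
  have hcq : (c : R) * q = -1 := by
    have h1 : ((-hq.unit) * c : Rˣ) = 1 := by rw [hcdef, mul_inv_cancel]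
    have h2 : ((-hq.unit : Rˣ) : R) * (c : R) = 1 := by
      rw [← Units.val_mul, h1, Units.val_one]
    have h3 : ((-hq.unit : Rˣ) : R) = -q := by rw [Units.val_neg, IsUnit.unit_spec]
    rw [h3] at h2
    linear_combination -h2
  rw [finsum_mem_eq_finite_toFinset_sum _ (Set.toFinite _),
      finsum_mem_eq_finite_toFinset_sum _ (Set.toFinite _)]
  have hconj : IsCompositionOf (conjFn l) r := conj_comp hl
  suffices hmain : ∀ n (w : Equiv.Perm (Fin r)), permLength w ≤ n →
      (∑ u ∈ (Set.toFinite (YoungSubgroup (r := r) g)).toFinset, T u) * T w *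
        (∑ u ∈ (Set.toFinite (YoungSubgroup (r := r) (conjFn l))).toFinset,
          ((c ^ permLength u : Rˣ) : R) • T u) = 0 by
    exact hmain (permLength w) w le_rfl
  intro n
  induction n using Nat.strong_induction_on with
  | _ n ih =>
  intro w hw
  set X := ∑ u ∈ (Set.toFinite (YoungSubgroup (r := r) g)).toFinset, T u with hX
  set Y := ∑ u ∈ (Set.toFinite (YoungSubgroup (r := r) (conjFn l))).toFinset,
      ((c ^ permLength u : Rˣ) : R) • T u with hY
  by_cases hcase1 : ∃ (i : ℕ) (hi : i + 1 < r),
      rowIndex g (⟨i, Nat.lt_of_succ_lt hi⟩ : Fin r) = rowIndex g (⟨i + 1, hi⟩ : Fin r) ∧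
      permLength (Equiv.swap (⟨i, Nat.lt_of_succ_lt hi⟩ : Fin r) ⟨i + 1, hi⟩ * w) + 1
        = permLength w
  · obtain ⟨i, hi, hrow, hdesc⟩ := hcase1
    set s := Equiv.swap (⟨i, Nat.lt_of_succ_lt hi⟩ : Fin r) ⟨i + 1, hi⟩ with hsdef
    have hssimple : IsSimpleTransposition s := ⟨i, hi, rfl⟩
    have hsY : s ∈ YoungSubgroup (r := r) g := swap_mem_young hi hrow
    set w' := s * w with hw'def
    have hsw' : s * w' = w := by
      rw [hw'def, ← mul_assoc, simple_mul_self hssimple, one_mul]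
    have hTw : T s * T w' = T w := by
      rw [T_mul_T' T hone hmul₁
        (show permLength (s * w') = permLength s + permLength w' from by
          rw [hsw', permLength_simple hssimple]; omega), hsw']
    have hzero := ih (n - 1) (by omega) w' (by omega)
    have hXs : X * T s = q • X := by
      rw [hX]; exact x_eigen T q hmul₁ hmul₂ hssimple hsY
    calc X * T w * Y = X * (T s * T w') * Y := by rw [hTw]
      _ = ((X * T s) * T w') * Y := by rw [mul_assoc X (T s) (T w')]
      _ = ((q • X) * T w') * Y := by rw [hXs]
      _ = q • (X * T w' * Y) := by rw [smul_mul_assoc, smul_mul_assoc]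
      _ = 0 := by rw [hzero, smul_zero]
  by_cases hcase2 : ∃ (j : ℕ) (hj : j + 1 < r),
      rowIndex (conjFn l) (⟨j, Nat.lt_of_succ_lt hj⟩ : Fin r)
        = rowIndex (conjFn l) (⟨j + 1, hj⟩ : Fin r) ∧
      permLength (w * Equiv.swap (⟨j, Nat.lt_of_succ_lt hj⟩ : Fin r) ⟨j + 1, hj⟩) + 1
        = permLength w
  · obtain ⟨j, hj, hrow, hdesc⟩ := hcase2
    set t := Equiv.swap (⟨j, Nat.lt_of_succ_lt hj⟩ : Fin r) ⟨j + 1, hj⟩ with htdef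
    have htsimple : IsSimpleTransposition t := ⟨j, hj, rfl⟩
    have htY : t ∈ YoungSubgroup (r := r) (conjFn l) := swap_mem_young hj hrow
    set w' := w * t with hw'def
    have hw't : w' * t = w := by
      rw [hw'def, mul_assoc, simple_mul_self htsimple, mul_one]
    have hTw : T w' * T t = T w := by
      rw [hmul₁ w' t htsimple (by rw [hw't]; omega), hw't]
    have hzero := ih (n - 1) (by omega) w' (by omega)
    have hTy : T t * Y = -Y := by
      rw [hY]; exact y_eigen T q hmul₁ hmul₂ hone hcq htsimple htY
    calc X * T w * Y = X * (T w' * T t) * Y := by rw [hTw]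
      _ = (X * T w') * (T t * Y) := by
          rw [← mul_assoc X (T w') (T t), mul_assoc (X * T w') (T t) Y]
      _ = (X * T w') * (-Y) := by rw [hTy]
      _ = -(X * T w' * Y) := by rw [mul_neg]
      _ = 0 := by rw [hzero, neg_zero]
  -- case 3
  have hc1 : ∀ (i : ℕ) (hi : i + 1 < r),
      rowIndex g (⟨i, Nat.lt_of_succ_lt hi⟩ : Fin r) = rowIndex g (⟨i + 1, hi⟩ : Fin r) →
      w⁻¹ (⟨i, Nat.lt_of_succ_lt hi⟩ : Fin r) < w⁻¹ (⟨i + 1, hi⟩ : Fin r) := by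
    intro i hi hrow
    by_contra hcon
    push_neg at hcon
    have hne' : w⁻¹ (⟨i + 1, hi⟩ : Fin r) ≠ w⁻¹ (⟨i, Nat.lt_of_succ_lt hi⟩ : Fin r) := by
      intro hc
      have := w⁻¹.injective hc
      have := congrArg Fin.val this
      simp at this
    have hlt : w⁻¹ (⟨i + 1, hi⟩ : Fin r) < w⁻¹ (⟨i, Nat.lt_of_succ_lt hi⟩ : Fin r) :=
      lt_of_le_of_ne hcon hne'
    exact hcase1 ⟨i, hi, hrow, permLength_swap_mul' hi hlt⟩
  have hc2 : ∀ (j : ℕ) (hj : j + 1 < r),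
      rowIndex (conjFn l) (⟨j, Nat.lt_of_succ_lt hj⟩ : Fin r)
        = rowIndex (conjFn l) (⟨j + 1, hj⟩ : Fin r) →
      w (⟨j, Nat.lt_of_succ_lt hj⟩ : Fin r) < w (⟨j + 1, hj⟩ : Fin r) := by
    intro j hj hrow
    by_contra hcon
    push_neg at hcon
    have hne' : w (⟨j + 1, hj⟩ : Fin r) ≠ w (⟨j, Nat.lt_of_succ_lt hj⟩ : Fin r) := by
      intro hc
      have := w.injective hc
      have := congrArg Fin.val this
      simp at this
    have hlt : w (⟨j + 1, hj⟩ : Fin r) < w (⟨j, Nat.lt_of_succ_lt hj⟩ : Fin r) :=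
      lt_of_le_of_ne hcon hne'
    exact hcase2 ⟨j, hj, hrow, permLength_mul_swap' hj hlt⟩
  by_cases hcase3a : ∃ (i : ℕ) (hi : i + 1 < r),
      rowIndex g (⟨i, Nat.lt_of_succ_lt hi⟩ : Fin r) = rowIndex g (⟨i + 1, hi⟩ : Fin r) ∧
      rowIndex (conjFn l) (w⁻¹ (⟨i, Nat.lt_of_succ_lt hi⟩ : Fin r))
        = rowIndex (conjFn l) (w⁻¹ (⟨i + 1, hi⟩ : Fin r))
  · obtain ⟨i, hi, hrowg, hrowl⟩ := hcase3a
    set s := Equiv.swap (⟨i, Nat.lt_of_succ_lt hi⟩ : Fin r) ⟨i + 1, hi⟩ with hsdef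
    have hssimple : IsSimpleTransposition s := ⟨i, hi, rfl⟩
    have hsY : s ∈ YoungSubgroup (r := r) g := swap_mem_young hi hrowg
    set a := w⁻¹ (⟨i, Nat.lt_of_succ_lt hi⟩ : Fin r) with hadef
    set b := w⁻¹ (⟨i + 1, hi⟩ : Fin r) with hbdef
    have hab : a < b := hc1 i hi hrowg
    have hrowab : rowIndex (conjFn l) a = rowIndex (conjFn l) b := hrowl
    have hchain := chain_lemma hconj w hc2 hab hrowab
    have hwa : w a = ⟨i, Nat.lt_of_succ_lt hi⟩ := by
      rw [hadef]; exact Equiv.apply_symm_apply w _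
    have hwb : w b = ⟨i + 1, hi⟩ := by
      rw [hbdef]; exact Equiv.apply_symm_apply w _
    have hbadj : (b : ℕ) = (a : ℕ) + 1 := by
      have h1 : ((w a : Fin r) : ℕ) = i := by rw [hwa]
      have h2 : ((w b : Fin r) : ℕ) = i + 1 := by rw [hwb]
      have habv : (a : ℕ) < (b : ℕ) := hab
      omega
    have ha1 : (a : ℕ) + 1 < r := by rw [← hbadj]; exact b.isLt
    have hbmk : (⟨(a : ℕ) + 1, ha1⟩ : Fin r) = b :=
      Fin.ext (show (a : ℕ) + 1 = (b : ℕ) by omega)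
    set t := Equiv.swap a b with htdef
    have hswap_eq : Equiv.swap (⟨(a : ℕ), Nat.lt_of_succ_lt ha1⟩ : Fin r) ⟨(a : ℕ) + 1, ha1⟩
        = t := by rw [htdef, ← hbmk]
    have htsimple : IsSimpleTransposition t := ⟨(a : ℕ), ha1, hswap_eq.symm⟩
    have htY : t ∈ YoungSubgroup (r := r) (conjFn l) := by
      rw [← hswap_eq]
      apply swap_mem_young ha1
      rw [hbmk]
      exact hrowab
    have hta : t a = b := Equiv.swap_apply_left a b
    have htb : t b = a := Equiv.swap_apply_right a b
    have hwt : w * t = s * w := by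
      apply Equiv.ext
      intro x
      rw [Equiv.Perm.mul_apply, Equiv.Perm.mul_apply]
      by_cases hxa : x = a
      · subst hxa
        rw [hta, hwb, hwa, hsdef, Equiv.swap_apply_left]
      · by_cases hxb : x = b
        · subst hxb
          rw [htb, hwa, hwb, hsdef, Equiv.swap_apply_right]
        · have htx : t x = x := by
            rw [htdef]
            exact Equiv.swap_apply_of_ne_of_ne hxa hxb
          have hne1 : w x ≠ (⟨i, Nat.lt_of_succ_lt hi⟩ : Fin r) := by
            intro hcx
            apply hxa
            rw [hadef, ← hcx]; exact (Equiv.symm_apply_apply w x).symm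
          have hne2 : w x ≠ (⟨i + 1, hi⟩ : Fin r) := by
            intro hcx
            apply hxb
            rw [hbdef, ← hcx]; exact (Equiv.symm_apply_apply w x).symm
          rw [htx, hsdef, Equiv.swap_apply_of_ne_of_ne hne1 hne2]
    have hlen_wt : permLength (w * t) = permLength w + 1 := by
      rw [← hswap_eq]
      apply permLength_mul_swap ha1
      have h1 : w (⟨(a : ℕ), Nat.lt_of_succ_lt ha1⟩ : Fin r) = (⟨i, Nat.lt_of_succ_lt hi⟩ : Fin r) := hwa
      have h2 : w (⟨(a : ℕ) + 1, ha1⟩ : Fin r) = (⟨i + 1, hi⟩ : Fin r) := by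
        rw [hbmk]; exact hwb
      rw [h1, h2]
      exact Fin.lt_def.2 (show i < i + 1 by omega)
    have hTwt : T w * T t = T s * T w := by
      rw [hmul₁ w t htsimple hlen_wt, hwt,
        ← T_mul_T' T hone hmul₁
          (show permLength (s * w) = permLength s + permLength w from by
            rw [← hwt, hlen_wt, permLength_simple hssimple]; omega)]
    set Z := ∑ e ∈ ((Set.toFinite (YoungSubgroup (r := r) (conjFn l))).toFinset.filter
        (fun v => permLength v < permLength (t * v))),
        ((c ^ permLength e : Rˣ) : R) • T e with hZ
    have hY' : Y = Z + (c : R) • (T t * Z) := by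
      rw [hY, hZ]
      exact y_factor T hmul₁ hone c htsimple htY
    have hXs : X * T s = q • X := by
      rw [hX]
      exact x_eigen T q hmul₁ hmul₂ hssimple hsY
    have hXTwZ : X * T w * (T t * Z) = q • (X * T w * Z) := by
      calc X * T w * (T t * Z) = ((X * T w) * T t) * Z :=
            (mul_assoc (X * T w) (T t) Z).symm
        _ = (X * (T w * T t)) * Z := by rw [mul_assoc X (T w) (T t)]
        _ = (X * (T s * T w)) * Z := by rw [hTwt]
        _ = ((X * T s) * T w) * Z := by rw [← mul_assoc X (T s) (T w)]
        _ = ((q • X) * T w) * Z := by rw [hXs]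
        _ = q • (X * T w * Z) := by rw [smul_mul_assoc, smul_mul_assoc]
    calc X * T w * Y = X * T w * (Z + (c : R) • (T t * Z)) := by rw [← hY']
      _ = X * T w * Z + (c : R) • (X * T w * (T t * Z)) := by
          rw [mul_add, mul_smul_comm]
      _ = X * T w * Z + (c : R) • (q • (X * T w * Z)) := by rw [hXTwZ]
      _ = X * T w * Z + (((c : R) * q) • (X * T w * Z)) := by rw [smul_smul]
      _ = X * T w * Z + ((-1 : R) • (X * T w * Z)) := by rw [hcq]
      _ = 0 := by rw [neg_one_smul, add_neg_cancel]
  · -- case 3b : combinatorial contradiction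
    exfalso
    have hc3 : ∀ (i : ℕ) (hi : i + 1 < r),
        rowIndex g (⟨i, Nat.lt_of_succ_lt hi⟩ : Fin r) = rowIndex g (⟨i + 1, hi⟩ : Fin r) →
        rowIndex (conjFn l) (w⁻¹ (⟨i, Nat.lt_of_succ_lt hi⟩ : Fin r))
          ≠ rowIndex (conjFn l) (w⁻¹ (⟨i + 1, hi⟩ : Fin r)) := by
      intro i hi hrow hcol
      exact hcase3a ⟨i, hi, hrow, hcol⟩
    obtain ⟨Nl, hNl0, hNl⟩ := exists_comp_bound hl
    obtain ⟨Ng, hNg0, hNg⟩ := exists_comp_bound hg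
    set N := max Nl Ng with hNdef
    have hstep := pos_le_col hg hconj w hc1 hc3
    have hmins : ∀ e, ∑ k ∈ Finset.range N, min (l k) e
        ≤ ∑ k ∈ Finset.range N, min (g k) e := by
      intro e
      have hA : partialSum (conjFn l) e = ∑ k ∈ Finset.range N, min (l k) e :=
        conj_partialSum (fun k hk => hNl0 k (by omega)) e
      have hb1 : (Finset.univ.filter
            (fun b : Fin r => rowIndex (conjFn l) (w⁻¹ b) < e)).card
          = (Finset.univ.filter (fun b : Fin r => rowIndex (conjFn l) b < e)).card := by
        refine Finset.card_nbij' (fun b => w⁻¹ b) (fun b => w b) ?_ ?_ ?_ ?_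
        · intro b hb
          simp only [Finset.mem_coe, Finset.mem_filter, Finset.mem_univ, true_and] at hb ⊢
          exact hb
        · intro b hb
          simp only [Finset.mem_coe, Finset.mem_filter, Finset.mem_univ, true_and] at hb ⊢
          simpa using hb
        · intro b _
          simp
        · intro b _
          simp
      have hb2 : (Finset.univ.filter (fun b : Fin r => rowIndex (conjFn l) b < e))
          = (Finset.univ.filter (fun b : Fin r => (b : ℕ) < partialSum (conjFn l) e)) := by
        apply Finset.filter_congr
        intro b _
        exact rowIndex_lt_iff hconj
      have hcard1 : (Finset.univ.filter
            (fun b : Fin r => rowIndex (conjFn l) (w⁻¹ b) < e)).card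
          = partialSum (conjFn l) e := by
        rw [hb1, hb2, count_val_lt (partialSum_le_total hconj e)]
      have hsubset : (Finset.univ.filter
            (fun b : Fin r => rowIndex (conjFn l) (w⁻¹ b) < e))
          ⊆ (Finset.univ.filter
            (fun b : Fin r => (b : ℕ) - partialSum g (rowIndex g b) < e)) := by
        intro b hb
        simp only [Finset.mem_filter, Finset.mem_univ, true_and] at hb ⊢
        have := hstep b
        omega
      have hcard2 := count_pos_lt hg (N := N)
        (fun e' he' => hNg e' (by omega)) e
      calc ∑ k ∈ Finset.range N, min (l k) e = partialSum (conjFn l) e := hA.symm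
        _ = (Finset.univ.filter
            (fun b : Fin r => rowIndex (conjFn l) (w⁻¹ b) < e)).card := hcard1.symm
        _ ≤ (Finset.univ.filter
            (fun b : Fin r => (b : ℕ) - partialSum g (rowIndex g b) < e)).card :=
            Finset.card_le_card hsubset
        _ ≤ ∑ k ∈ Finset.range N, min (g k) e := hcard2
    have hdom' : DomLE g l := mins_imp_dom hl hlp hg
      (fun e he => hNl e (by omega)) (fun e he => hNg e (by omega)) hmins
    exact hne (domle_antisymm hdom hdom')
end
end
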